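/- arXiv:2108.00628 — 5 statements merged into one kernel-verified Lean document; each statement's English description precedes it below -/
import Mathlib

section
/- Let Y be a closed subspace of a Banach space X. If for every nonempty closed bounded subset F of X the set cent_{B_Y}(F) is nonempty (i.e., the pair (B_Y, CB(X)) has the restricted center property), then for every nonempty closed bounded subset F of X the set cent_Y(F) is also nonempty. -/
/-!
Centers are equivariant under scaling: `c • cent_V(B) ⊆ cent_{c • V}(c • B)`. A Chebyshev center
of `F` in `Y` may be sought in `Y ∩ closedBall 0 R` once `R ≥ rad_Y(F) + 1 + ‖b₀‖` for some
`b₀ ∈ F`, since every `y ∈ Y` with `r(y, F) < rad_Y(F) + 1` already lies in that ball. As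
`R • B_Y = Y ∩ closedBall 0 R`, a restricted center of `R⁻¹ • F` in `B_Y`, scaled by `R`, is a
center of `F` in `Y`.
-/

open Metric Set Pointwise

/-- `r(x,B) = sup_{b ∈ B} ‖x - b‖`. -/
noncomputable def chebR {X : Type*} [NormedAddCommGroup X] (x : X) (B : Set X) : ℝ :=
  ⨆ b : B, ‖x - (b : X)‖

/-- `rad_V(B) = inf_{v ∈ V} r(v,B)`, the restricted Chebyshev radius. -/
noncomputable def chebRad {X : Type*} [NormedAddCommGroup X] (V B : Set X) : ℝ :=
  ⨅ v : V, chebR (v : X) B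

/-- `cent_V(B)`, the set of restricted Chebyshev centers of `B` w.r.t. `V`. -/
noncomputable def chebCent {X : Type*} [NormedAddCommGroup X] (V B : Set X) : Set X :=
  {v ∈ V | chebR v B ≤ chebRad V B}

/-- `cent_V(B,δ) = {v ∈ V : r(v,B) ≤ rad_V(B) + δ}`. -/
noncomputable def chebCentA {X : Type*} [NormedAddCommGroup X] (V B : Set X) (δ : ℝ) : Set X :=
  {v ∈ V | chebR v B ≤ chebRad V B + δ}

section ChebyshevRadius

variable {X : Type*} [NormedAddCommGroup X]

lemma chebR_nonneg (x : X) (B : Set X) : 0 ≤ chebR x B :=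
  Real.iSup_nonneg fun _ => norm_nonneg _

lemma norm_sub_le_chebR {x b : X} {B : Set X} (hB : Bornology.IsBounded B) (hb : b ∈ B) :
    ‖x - b‖ ≤ chebR x B := by
  obtain ⟨M, hM⟩ := isBounded_iff_forall_norm_le.mp hB
  refine le_ciSup (f := fun b : B => ‖x - (b : X)‖) ⟨‖x‖ + M, ?_⟩ ⟨b, hb⟩
  rintro _ ⟨b', rfl⟩
  exact (norm_sub_le _ _).trans (by gcongr; exact hM b' b'.2)

lemma chebRad_le_chebR {v : X} {V : Set X} (B : Set X) (hv : v ∈ V) :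
    chebRad V B ≤ chebR v B :=
  ciInf_le (f := fun w : V => chebR (w : X) B)
    ⟨0, by rintro _ ⟨w, rfl⟩; exact chebR_nonneg _ _⟩ ⟨v, hv⟩

lemma chebRad_nonneg (V B : Set X) : 0 ≤ chebRad V B :=
  Real.iInf_nonneg fun _ => chebR_nonneg _ _

lemma chebCent_subset_of_chebRad_le {V W B : Set X} (hVW : V ⊆ W)
    (hrad : chebRad V B ≤ chebRad W B) : chebCent V B ⊆ chebCent W B :=
  fun _ ⟨hv, hvc⟩ => ⟨hVW hv, hvc.trans hrad⟩

lemma chebRad_inter_closedBall_le {V B : Set X} (hV : V.Nonempty) (hB : Bornology.IsBounded B)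
    {b₀ : X} (hb₀ : b₀ ∈ B) {R : ℝ} (hR : chebRad V B + 1 + ‖b₀‖ ≤ R) :
    chebRad (V ∩ closedBall 0 R) B ≤ chebRad V B := by
  have : Nonempty V := hV.to_subtype
  refine le_of_forall_pos_le_add fun ε hε => ?_
  obtain ⟨⟨y, hyV⟩, hy⟩ :=
    exists_lt_of_ciInf_lt (lt_add_of_pos_right (chebRad V B) (lt_min hε one_pos))
  have hy : chebR y B < chebRad V B + min ε 1 := hy
  have hyR : ‖y‖ ≤ R := calc
    ‖y‖ ≤ ‖y - b₀‖ + ‖b₀‖ := norm_le_norm_sub_add y b₀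
    _ ≤ chebR y B + ‖b₀‖ := add_le_add_left (norm_sub_le_chebR hB hb₀) _
    _ ≤ R := by linarith [min_le_right ε 1]
  calc chebRad (V ∩ closedBall 0 R) B
      ≤ chebR y B := chebRad_le_chebR B ⟨hyV, mem_closedBall_zero_iff.mpr hyR⟩
    _ ≤ chebRad V B + ε := by linarith [min_le_left ε 1]

end ChebyshevRadius

section Scaling

variable {𝕜 X : Type*} [NormedField 𝕜] [NormedAddCommGroup X] [NormedSpace 𝕜 X]

lemma chebR_smul (c : 𝕜) (x : X) (B : Set X) : chebR (c • x) (c • B) = ‖c‖ * chebR x B := by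
  rw [chebR, chebR, Real.mul_iSup_of_nonneg (norm_nonneg c), iSup, iSup]
  congr 1
  ext t
  simp only [mem_range, Subtype.exists, mem_smul_set, exists_prop]
  constructor
  · rintro ⟨_, ⟨b, hb, rfl⟩, rfl⟩
    exact ⟨b, hb, by rw [← smul_sub, norm_smul]⟩
  · rintro ⟨b, hb, rfl⟩
    exact ⟨c • b, ⟨b, hb, rfl⟩, by rw [← smul_sub, norm_smul]⟩

lemma chebRad_smul (c : 𝕜) (V B : Set X) : chebRad (c • V) (c • B) = ‖c‖ * chebRad V B := by
  rw [chebRad, chebRad, Real.mul_iInf_of_nonneg (norm_nonneg c), iInf, iInf]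
  congr 1
  ext t
  simp only [mem_range, Subtype.exists, mem_smul_set, exists_prop]
  constructor
  · rintro ⟨_, ⟨v, hv, rfl⟩, rfl⟩
    exact ⟨v, hv, (chebR_smul c v B).symm⟩
  · rintro ⟨v, hv, rfl⟩
    exact ⟨c • v, ⟨v, hv, rfl⟩, chebR_smul c v B⟩

lemma smul_mem_chebCent (c : 𝕜) {v : X} {V B : Set X} (hv : v ∈ chebCent V B) :
    c • v ∈ chebCent (c • V) (c • B) := by
  refine ⟨smul_mem_smul_set hv.1, ?_⟩
  rw [chebR_smul, chebRad_smul]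
  exact mul_le_mul_of_nonneg_left hv.2 (norm_nonneg c)

end Scaling

lemma Submodule.smul_inter_closedUnitBall {X : Type*} [NormedAddCommGroup X] [NormedSpace ℝ X]
    (Y : Submodule ℝ X) {R : ℝ} (hR : 0 < R) :
    R • ((Y : Set X) ∩ closedBall 0 1) = (Y : Set X) ∩ closedBall 0 R := by
  have hY : R • (Y : Set X) = Y := by
    ext x
    rw [mem_smul_set_iff_inv_smul_mem₀ hR.ne']
    exact Y.smul_mem_iff (inv_ne_zero hR.ne')
  rw [smul_set_inter₀ hR.ne', hY, smul_closedBall' hR.ne', smul_zero, Real.norm_of_nonneg hR.le,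
    mul_one]

theorem stmt_3_general {X : Type*} [NormedAddCommGroup X] [NormedSpace ℝ X]
    (Y : Submodule ℝ X)
    (hrcp : ∀ F : Set X, F.Nonempty → IsClosed F → Bornology.IsBounded F →
      (chebCent ((Y : Set X) ∩ closedBall 0 1) F).Nonempty) :
    ∀ F : Set X, F.Nonempty → IsClosed F → Bornology.IsBounded F →
      (chebCent (Y : Set X) F).Nonempty := by
  intro F ⟨b₀, hb₀⟩ hFc hFb
  set R := chebRad (Y : Set X) F + 1 + ‖b₀‖
  have hR : 0 < R := by positivity [chebRad_nonneg (Y : Set X) F]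
  obtain ⟨v, hv⟩ := hrcp (R⁻¹ • F) ⟨R⁻¹ • b₀, smul_mem_smul_set hb₀⟩
    (hFc.smul_of_ne_zero (inv_ne_zero hR.ne')) (hFb.smul₀ R⁻¹)
  have hRv := smul_mem_chebCent R hv
  rw [smul_inv_smul₀ hR.ne', Y.smul_inter_closedUnitBall hR] at hRv
  exact ⟨R • v, chebCent_subset_of_chebRad_le inter_subset_left
    (chebRad_inter_closedBall_le ⟨0, Y.zero_mem⟩ hFb hb₀ le_rfl) hRv⟩

/-- if `(B_Y, CB(X))` has the restricted center property then so does `(Y, CB(X))`. -/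
theorem stmt_3 {X : Type*} [NormedAddCommGroup X] [NormedSpace ℝ X] [CompleteSpace X]
    (Y : Submodule ℝ X) (hYc : IsClosed (Y : Set X))
    (hrcp : ∀ F : Set X, F.Nonempty → IsClosed F → Bornology.IsBounded F →
      (chebCent ((Y : Set X) ∩ closedBall 0 1) F).Nonempty) :
    ∀ F : Set X, F.Nonempty → IsClosed F → Bornology.IsBounded F →
      (chebCent (Y : Set X) F).Nonempty :=
  stmt_3_general Y hrcp
end

section
/- Let S be a compact Hausdorff space, μ₁,…,μₙ norm-one regular Borel measures on S each with finite support, and Y = ⋂ᵢ ker(μᵢ) ⊆ C(S). Then for every nonempty compact F ⊆ C(S), the set of restricted Chebyshev centers cent_{B_Y}(F) is nonempty, and (C(S), B_Y, K(C(S))) has property-(P₁). -/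
/-!
The proof reduces everything to the finite set `A` carrying the measures. For `r ≥ 0`, a function
`f` lies in `B_Y` with `r(f, F) ≤ r` iff its values on `A` satisfy the constraints and
`max (u - r) (-1) ≤ f ≤ min (l + r) 1`, where `u`, `l` are the upper and lower envelopes of `F`,
which are continuous because `F` is compact. The admissible traces on `A` form compact subsets
of `ℝ^A` decreasing to the traces at level `rad`, so Cantor's intersection theorem gives a trace
at level `rad`, and compactness also makes the traces at level `rad + δ` `ε`-close to it for small
`δ`. Tietze extension followed by clamping turns a trace into a continuous function in the
prescribed band, which is the required center.
-/

open Metric Set Pointwise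

section ChebyshevRadius

variable {X : Type*} [NormedAddCommGroup X] {V B : Set X}

lemma chebR_le_iff (hB : B.Nonempty) (hBb : Bornology.IsBounded B) {x : X} {r : ℝ} :
    chebR x B ≤ r ↔ ∀ b ∈ B, ‖x - b‖ ≤ r := by
  obtain ⟨C, hC⟩ := hBb.exists_norm_le
  have hbdd : BddAbove (range fun b : B => ‖x - (b : X)‖) := by
    refine ⟨‖x‖ + C, forall_mem_range.2 fun b => ?_⟩
    exact (norm_sub_le _ _).trans (add_le_add le_rfl (hC b b.2))
  have := hB.to_subtype
  exact ⟨fun h b hb => (le_ciSup hbdd ⟨b, hb⟩).trans h, fun h => ciSup_le fun b => h b b.2⟩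

lemma chebRad_nonneg_s13 (hB : B.Nonempty) (hBb : Bornology.IsBounded B) (hV : V.Nonempty) :
    0 ≤ chebRad V B := by
  have := hV.to_subtype
  have ⟨b, hb⟩ := hB
  exact le_ciInf fun v => (norm_nonneg _).trans ((chebR_le_iff hB hBb).1 le_rfl b hb)

lemma chebCentA_nonempty (hV : V.Nonempty) {δ : ℝ} (hδ : 0 < δ) :
    (chebCentA V B δ).Nonempty := by
  have := hV.to_subtype
  obtain ⟨v, hv⟩ := exists_lt_of_ciInf_lt (lt_add_of_pos_right (chebRad V B) hδ)
  exact ⟨v, v.2, hv.le⟩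

end ChebyshevRadius

section Envelopes

variable {S : Type*} [TopologicalSpace S]

noncomputable def upperEnvelope (F : Set C(S, ℝ)) (s : S) : ℝ :=
  sSup ((fun g : C(S, ℝ) => g s) '' F)

noncomputable def lowerEnvelope (F : Set C(S, ℝ)) (s : S) : ℝ :=
  sInf ((fun g : C(S, ℝ) => g s) '' F)

variable {F : Set C(S, ℝ)}

lemma continuous_upperEnvelope [CompactSpace S] (hF : IsCompact F) :
    Continuous (upperEnvelope F) :=
  hF.continuous_sSup (f := fun s (g : C(S, ℝ)) => g s) (continuous_eval.comp continuous_swap)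

lemma continuous_lowerEnvelope [CompactSpace S] (hF : IsCompact F) :
    Continuous (lowerEnvelope F) :=
  hF.continuous_sInf (f := fun s (g : C(S, ℝ)) => g s) (continuous_eval.comp continuous_swap)

lemma le_upperEnvelope (hF : IsCompact F) {g : C(S, ℝ)} (hg : g ∈ F) (s : S) :
    g s ≤ upperEnvelope F s :=
  le_csSup (hF.image (continuous_eval_const s)).bddAbove (mem_image_of_mem _ hg)

lemma lowerEnvelope_le (hF : IsCompact F) {g : C(S, ℝ)} (hg : g ∈ F) (s : S) :
    lowerEnvelope F s ≤ g s :=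
  csInf_le (hF.image (continuous_eval_const s)).bddBelow (mem_image_of_mem _ hg)

lemma upperEnvelope_le (hF : F.Nonempty) {s : S} {b : ℝ} (h : ∀ g ∈ F, g s ≤ b) :
    upperEnvelope F s ≤ b :=
  csSup_le (hF.image _) (forall_mem_image.2 h)

lemma le_lowerEnvelope (hF : F.Nonempty) {s : S} {b : ℝ} (h : ∀ g ∈ F, b ≤ g s) :
    b ≤ lowerEnvelope F s :=
  le_csInf (hF.image _) (forall_mem_image.2 h)

lemma forall_norm_sub_le_iff [CompactSpace S] (hF : F.Nonempty) (hFc : IsCompact F)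
    {f : C(S, ℝ)} {r : ℝ} (hr : 0 ≤ r) :
    (∀ g ∈ F, ‖f - g‖ ≤ r) ↔ ∀ s, upperEnvelope F s - r ≤ f s ∧ f s ≤ lowerEnvelope F s + r := by
  simp only [ContinuousMap.norm_le _ hr, ContinuousMap.sub_apply, Real.norm_eq_abs, abs_le]
  constructor
  · intro h s
    have hu := upperEnvelope_le hF fun g hg => show g s ≤ f s + r by linarith [(h g hg s).1]
    have hl := le_lowerEnvelope hF fun g hg => show f s - r ≤ g s by linarith [(h g hg s).2]
    constructor <;> linarith
  · intro h g hg s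
    have := le_upperEnvelope hFc hg s
    have := lowerEnvelope_le hFc hg s
    constructor <;> linarith [h s]

variable (F)

/-- `[bandLo F r, bandHi F r]` is the band of values allowed to `f` with `‖f‖ ≤ 1` and
`r(f, F) ≤ r`, see `norm_le_one_and_chebR_le_iff`. -/
noncomputable def bandLo (r : ℝ) (s : S) : ℝ := max (upperEnvelope F s - r) (-1)

noncomputable def bandHi (r : ℝ) (s : S) : ℝ := min (lowerEnvelope F s + r) 1

variable {F}

lemma norm_le_one_and_chebR_le_iff [CompactSpace S] (hF : F.Nonempty) (hFc : IsCompact F)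
    {f : C(S, ℝ)} {r : ℝ} (hr : 0 ≤ r) :
    ‖f‖ ≤ 1 ∧ chebR f F ≤ r ↔ ∀ s, f s ∈ Icc (bandLo F r s) (bandHi F r s) := by
  rw [chebR_le_iff hF hFc.isBounded, forall_norm_sub_le_iff hF hFc hr,
    ContinuousMap.norm_le _ zero_le_one]
  simp only [Real.norm_eq_abs, abs_le, mem_Icc, bandLo, bandHi, max_le_iff, le_min_iff]
  exact ⟨fun h s => ⟨⟨(h.2 s).1, (h.1 s).1⟩, (h.2 s).2, (h.1 s).2⟩,
    fun h => ⟨fun s => ⟨(h s).1.2, (h s).2.2⟩, fun s => ⟨(h s).1.1, (h s).2.1⟩⟩⟩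

lemma bandLo_antitone : Antitone (bandLo F) :=
  fun _ _ h s => max_le_max (by linarith) le_rfl

lemma bandHi_monotone : Monotone (bandHi F) :=
  fun _ _ h s => min_le_min (by linarith) le_rfl

lemma bandLo_le_add {r δ : ℝ} (hδ : 0 ≤ δ) (s : S) : bandLo F r s ≤ bandLo F (r + δ) s + δ := by
  rw [bandLo, bandLo, ← max_add_add_right]
  exact max_le_max (by linarith) (by linarith)

lemma bandHi_add_le {r δ : ℝ} (hδ : 0 ≤ δ) (s : S) : bandHi F (r + δ) s ≤ bandHi F r s + δ := by
  rw [bandHi, bandHi, ← min_add_add_right]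
  exact min_le_min (by linarith) (by linarith)

lemma continuous_bandLo [CompactSpace S] (hF : IsCompact F) (r : ℝ) : Continuous (bandLo F r) :=
  ((continuous_upperEnvelope hF).sub continuous_const).max continuous_const

lemma continuous_bandHi [CompactSpace S] (hF : IsCompact F) (r : ℝ) : Continuous (bandHi F r) :=
  ((continuous_lowerEnvelope hF).add continuous_const).min continuous_const

lemma bandLo_le_bandHi_of_forall_pos {r : ℝ} (h : ∀ δ > 0, bandLo F (r + δ) ≤ bandHi F (r + δ)) :
    bandLo F r ≤ bandHi F r := fun s =>
  le_of_forall_pos_le_add fun ε hε => by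
    have := h (ε / 2) (half_pos hε) s
    linarith [bandLo_le_add (F := F) (r := r) (half_pos hε).le s,
      bandHi_add_le (F := F) (r := r) (half_pos hε).le s]

end Envelopes

lemma exists_continuousMap_mem_Icc_and_eq {S : Type*} [TopologicalSpace S] [NormalSpace S]
    [T1Space S] (A : Finset S) {U L : S → ℝ} (hU : Continuous U) (hL : Continuous L) (hUL : U ≤ L)
    (t : A → ℝ) (ht : ∀ a : A, t a ∈ Icc (U a) (L a)) :
    ∃ f : C(S, ℝ), (∀ s, f s ∈ Icc (U s) (L s)) ∧ ∀ a : A, f a = t a := by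
  obtain ⟨h, hh⟩ := ContinuousMap.exists_restrict_eq A.finite_toSet.isClosed
    (⟨t, continuous_of_discreteTopology⟩ : C((A : Set S), ℝ))
  refine ⟨⟨fun s => max (U s) (min (L s) (h s)), by fun_prop⟩,
    fun s => ⟨le_max_left _ _, max_le (hUL s) (min_le_left _ _)⟩, fun a => ?_⟩
  have hha : h a = t a := DFunLike.congr_fun hh a
  simp only [ContinuousMap.coe_mk, hha, min_eq_right (ht a).2, max_eq_right (ht a).1]

section DecreasingCompacts

variable {X : Type*} {K : ℝ → Set X} {ρ : ℝ}

lemma directed_superset_add_pos (hK : Monotone K) :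
    Directed (· ⊇ ·) fun δ : Ioi (0 : ℝ) => K (ρ + δ) :=
  Monotone.directed_ge fun _ _ h => hK (add_le_add_right (Subtype.coe_le_coe.2 h) ρ)

lemma nonempty_of_forall_pos_nonempty [TopologicalSpace X] [T2Space X] (hK : Monotone K)
    (hKc : ∀ r, IsCompact (K r)) (hρ : ⋂ δ : Ioi (0 : ℝ), K (ρ + δ) ⊆ K ρ)
    (hne : ∀ δ > 0, (K (ρ + δ)).Nonempty) :
    (K ρ).Nonempty :=
  (IsCompact.nonempty_iInter_of_directed_nonempty_isCompact_isClosed _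
    (directed_superset_add_pos hK) (fun δ => hne δ δ.2) (fun _ => hKc _)
    (fun _ => (hKc _).isClosed)).mono hρ

lemma exists_pos_subset_thickening [MetricSpace X] (hK : Monotone K) (hKc : ∀ r, IsCompact (K r))
    (hρ : ⋂ δ : Ioi (0 : ℝ), K (ρ + δ) ⊆ K ρ) {ε : ℝ} (hε : 0 < ε) :
    ∃ δ > 0, K (ρ + δ) ⊆ thickening ε (K ρ) := by
  obtain ⟨δ, hδ⟩ := exists_subset_nhds_of_isCompact' (directed_superset_add_pos hK)
    (fun _ => hKc _) (fun _ => (hKc _).isClosed)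
    fun x hx => isOpen_thickening.mem_nhds (self_subset_thickening hε _ (hρ hx))
  exact ⟨δ, δ.2, hδ⟩

end DecreasingCompacts

section Traces

variable {S : Type*} [TopologicalSpace S] (A : Finset S) (P : Set (A → ℝ))

def traceConstrained : Set C(S, ℝ) := {f | (fun a : A => f a) ∈ P}

noncomputable def admissibleTraces (F : Set C(S, ℝ)) (r : ℝ) : Set (A → ℝ) :=
  P ∩ univ.pi fun a => Icc (bandLo F r a) (bandHi F r a)

variable {A P} {F : Set C(S, ℝ)}

lemma admissibleTraces_mono : Monotone (admissibleTraces A P F) :=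
  fun _ _ h _ ht => ⟨ht.1, fun a _ =>
    Icc_subset_Icc (bandLo_antitone (F := F) h a) (bandHi_monotone (F := F) h a) (ht.2 a trivial)⟩

lemma isCompact_admissibleTraces (hP : IsClosed P) (r : ℝ) :
    IsCompact (admissibleTraces A P F r) :=
  (isCompact_univ_pi fun _ => isCompact_Icc).inter_left hP

lemma iInter_admissibleTraces_subset (r : ℝ) :
    ⋂ δ : Ioi (0 : ℝ), admissibleTraces A P F (r + δ) ⊆ admissibleTraces A P F r := by
  intro t ht
  rw [mem_iInter] at ht
  refine ⟨(ht ⟨1, mem_Ioi.2 one_pos⟩).1, fun a _ => ⟨?_, ?_⟩⟩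
  · refine le_of_forall_pos_le_add fun δ hδ => ?_
    linarith [bandLo_le_add (F := F) (r := r) hδ.le a, ((ht ⟨δ, hδ⟩).2 a trivial).1]
  · refine le_of_forall_pos_le_add fun δ hδ => ?_
    linarith [bandHi_add_le (F := F) (r := r) hδ.le a, ((ht ⟨δ, hδ⟩).2 a trivial).2]

variable [CompactSpace S]

lemma mem_and_chebR_le_iff (hF : F.Nonempty) (hFc : IsCompact F) {f : C(S, ℝ)} {r : ℝ}
    (hr : 0 ≤ r) :
    f ∈ traceConstrained A P ∩ closedBall 0 1 ∧ chebR f F ≤ r ↔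
      (fun a : A => f a) ∈ P ∧ ∀ s, f s ∈ Icc (bandLo F r s) (bandHi F r s) := by
  rw [mem_inter_iff, mem_closedBall_zero_iff, and_assoc, norm_le_one_and_chebR_le_iff hF hFc hr]
  rfl

lemma trace_mem_admissibleTraces (hF : F.Nonempty) (hFc : IsCompact F) {f : C(S, ℝ)} {r : ℝ}
    (hr : 0 ≤ r) (hf : f ∈ traceConstrained A P ∩ closedBall 0 1 ∧ chebR f F ≤ r) :
    (fun a : A => f a) ∈ admissibleTraces A P F r :=
  have h := (mem_and_chebR_le_iff hF hFc hr).1 hf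
  ⟨h.1, fun a _ => h.2 a⟩

lemma exists_mem_and_chebR_le_of_trace [T2Space S] (hF : F.Nonempty) (hFc : IsCompact F)
    {r : ℝ} (hr : 0 ≤ r) {U L : S → ℝ} (hU : Continuous U) (hL : Continuous L) (hUL : U ≤ L)
    (hlo : bandLo F r ≤ U) (hhi : L ≤ bandHi F r) {t : A → ℝ} (htP : t ∈ P)
    (ht : ∀ a : A, t a ∈ Icc (U a) (L a)) :
    ∃ z, (z ∈ traceConstrained A P ∩ closedBall 0 1 ∧ chebR z F ≤ r) ∧
      ∀ s, z s ∈ Icc (U s) (L s) := by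
  obtain ⟨z, hzI, hzt⟩ := exists_continuousMap_mem_Icc_and_eq A hU hL hUL t ht
  have hzP : (fun a : A => z a) ∈ P := by rwa [show (fun a : A => z a) = t from funext hzt]
  exact ⟨z, (mem_and_chebR_le_iff hF hFc hr).2
    ⟨hzP, fun s => Icc_subset_Icc (hlo s) (hhi s) (hzI s)⟩, hzI⟩

end Traces

section Centers

variable {S : Type*} [TopologicalSpace S] [CompactSpace S] {A : Finset S}
  {P : Set (A → ℝ)} {F : Set C(S, ℝ)}

lemma bandLo_le_bandHi_chebRad (hF : F.Nonempty) (hFc : IsCompact F)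
    (hV : (traceConstrained A P ∩ closedBall 0 1).Nonempty) :
    bandLo F (chebRad (traceConstrained A P ∩ closedBall 0 1) F)
      ≤ bandHi F (chebRad (traceConstrained A P ∩ closedBall 0 1) F) :=
  bandLo_le_bandHi_of_forall_pos fun δ hδ s => by
    obtain ⟨v, hv⟩ := chebCentA_nonempty (B := F) hV hδ
    have hρ := chebRad_nonneg_s13 hF hFc.isBounded hV
    have hvs := ((mem_and_chebR_le_iff hF hFc (by positivity)).1 hv).2 s
    exact hvs.1.trans hvs.2

lemma chebCent_traceConstrained_nonempty [T2Space S] (hP : IsClosed P) (hF : F.Nonempty)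
    (hFc : IsCompact F) (hV : (traceConstrained A P ∩ closedBall 0 1).Nonempty) :
    (chebCent (traceConstrained A P ∩ closedBall 0 1) F).Nonempty := by
  have hρ := chebRad_nonneg_s13 hF hFc.isBounded hV
  obtain ⟨t, htP, ht⟩ := nonempty_of_forall_pos_nonempty admissibleTraces_mono
    (isCompact_admissibleTraces hP) (iInter_admissibleTraces_subset _) fun δ hδ => by
      obtain ⟨v, hv⟩ := chebCentA_nonempty (B := F) hV hδ
      exact ⟨_, trace_mem_admissibleTraces hF hFc (by positivity) hv⟩
  obtain ⟨z, hz, -⟩ := exists_mem_and_chebR_le_of_trace hF hFc hρ (continuous_bandLo hFc _)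
    (continuous_bandHi hFc _) (bandLo_le_bandHi_chebRad hF hFc hV) le_rfl le_rfl htP
    fun a => ht a trivial
  exact ⟨z, hz⟩

/-- The center is obtained by interpolating `t` within `ε` of `v` inside the band at level
`rad`; this part of the band is nonempty everywhere because `v` is within `δ ≤ ε` of it. -/
lemma exists_mem_chebCent_norm_sub_le [T2Space S] (hF : F.Nonempty) (hFc : IsCompact F)
    (hV : (traceConstrained A P ∩ closedBall 0 1).Nonempty) {δ ε : ℝ} (hδ : 0 ≤ δ) (hδε : δ ≤ ε)
    {v : C(S, ℝ)} (hv : v ∈ chebCentA (traceConstrained A P ∩ closedBall 0 1) F δ) {t : A → ℝ}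
    (ht : t ∈ admissibleTraces A P F (chebRad (traceConstrained A P ∩ closedBall 0 1) F))
    (hvt : ∀ a : A, |v a - t a| ≤ ε) :
    ∃ z ∈ chebCent (traceConstrained A P ∩ closedBall 0 1) F, ‖v - z‖ ≤ ε := by
  set ρ := chebRad (traceConstrained A P ∩ closedBall 0 1) F
  have hρ : 0 ≤ ρ := chebRad_nonneg_s13 hF hFc.isBounded hV
  have hvI := ((mem_and_chebR_le_iff hF hFc (by positivity)).1 hv).2
  have hUL : (fun s => max (bandLo F ρ s) (v s - ε)) ≤ fun s => min (bandHi F ρ s) (v s + ε) :=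
    fun s => by
      have := bandLo_le_add (F := F) (r := ρ) hδ s
      have := bandHi_add_le (F := F) (r := ρ) hδ s
      refine max_le (le_min (bandLo_le_bandHi_chebRad hF hFc hV s) ?_) (le_min ?_ (by linarith))
        <;> linarith [(hvI s).1, (hvI s).2]
  obtain ⟨z, hz, hzI⟩ := exists_mem_and_chebR_le_of_trace hF hFc hρ
    (U := fun s => max (bandLo F ρ s) (v s - ε)) (L := fun s => min (bandHi F ρ s) (v s + ε))
    ((continuous_bandLo hFc ρ).max (v.continuous.sub continuous_const))
    ((continuous_bandHi hFc ρ).min (v.continuous.add continuous_const)) hUL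
    (fun s => le_max_left _ _) (fun s => min_le_left _ _) ht.1 fun a =>
      ⟨max_le (ht.2 a trivial).1 (by linarith [(abs_sub_le_iff.1 (hvt a)).1]),
        le_min (ht.2 a trivial).2 (by linarith [(abs_sub_le_iff.1 (hvt a)).2])⟩
  refine ⟨z, hz, (ContinuousMap.norm_le _ (hδ.trans hδε)).2 fun s => ?_⟩
  rw [ContinuousMap.sub_apply, Real.norm_eq_abs, abs_sub_le_iff]
  have := le_max_right (bandLo F ρ s) (v s - ε)
  have := min_le_right (bandHi F ρ s) (v s + ε)
  constructor <;> linarith [(hzI s).1, (hzI s).2]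

lemma chebCentA_traceConstrained_subset [T2Space S] (hP : IsClosed P) (hF : F.Nonempty)
    (hFc : IsCompact F) (hV : (traceConstrained A P ∩ closedBall 0 1).Nonempty) {ε : ℝ}
    (hε : 0 < ε) :
    ∃ δ > 0, chebCentA (traceConstrained A P ∩ closedBall 0 1) F δ
      ⊆ chebCent (traceConstrained A P ∩ closedBall 0 1) F + ε • closedBall 0 1 := by
  set ρ := chebRad (traceConstrained A P ∩ closedBall 0 1) F
  have hρ : 0 ≤ ρ := chebRad_nonneg_s13 hF hFc.isBounded hV
  obtain ⟨δ, hδ, hδK⟩ := exists_pos_subset_thickening admissibleTraces_mono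
    (isCompact_admissibleTraces hP) (iInter_admissibleTraces_subset ρ) hε
  refine ⟨min δ ε, lt_min hδ hε, fun v hv => ?_⟩
  have hvK := admissibleTraces_mono (add_le_add_right (min_le_left δ ε) ρ)
    (trace_mem_admissibleTraces hF hFc (by positivity) hv)
  obtain ⟨t, ht, hvt⟩ := mem_thickening_iff.1 (hδK hvK)
  obtain ⟨z, hz, hvz⟩ := exists_mem_chebCent_norm_sub_le hF hFc hV (lt_min hδ hε).le
    (min_le_right δ ε) hv ht fun a => by
      simpa only [Real.dist_eq] using ((dist_pi_lt_iff hε).1 hvt a).le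
  rw [smul_unitClosedBall_of_nonneg hε.le]
  exact ⟨z, hz, v - z, mem_closedBall_zero_iff.2 hvz, add_sub_cancel z v⟩

end Centers

theorem stmt_13_general {S : Type*} [TopologicalSpace S] [CompactSpace S] [T2Space S]
    (n : ℕ) (c : Fin n → (S →₀ ℝ))
    (Y : Set C(S, ℝ)) (hY : Y = {f : C(S, ℝ) | ∀ i, ((c i).sum fun s a => a * f s) = 0}) :
    ∀ F : Set C(S, ℝ), F.Nonempty → IsCompact F →
      (chebCent (Y ∩ closedBall 0 1) F).Nonempty ∧
      ∀ ε > (0 : ℝ), ∃ δ > (0 : ℝ),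
        chebCentA (Y ∩ closedBall 0 1) F δ
          ⊆ chebCent (Y ∩ closedBall 0 1) F + ε • closedBall (0 : C(S, ℝ)) 1 := by
  classical
  intro F hF hFc
  set A := Finset.univ.biUnion fun i => (c i).support
  set P : Set (A → ℝ) := {t | ∀ i, ∑ a : A, c i a * t a = 0}
  obtain rfl : Y = traceConstrained A P := by
    rw [hY]
    ext f
    refine forall_congr' fun i => ?_
    rw [Finsupp.sum_of_support_subset _
      (Finset.subset_biUnion_of_mem (fun i => (c i).support) (Finset.mem_univ i))
      (fun s a => a * f s) fun _ _ => zero_mul _, ← Finset.sum_coe_sort]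
  have hP : IsClosed P := by
    simp only [P, ofPred_forall]
    exact isClosed_iInter fun i => isClosed_eq (by fun_prop) continuous_const
  have hV : (traceConstrained A P ∩ closedBall 0 1).Nonempty :=
    ⟨0, fun i => by simp, mem_closedBall_self zero_le_one⟩
  exact ⟨chebCent_traceConstrained_nonempty hP hF hFc hV,
    fun ε hε => chebCentA_traceConstrained_subset hP hF hFc hV hε⟩

/-- for `Y = ⋂ᵢ ker μᵢ ⊆ C(S)` with each `μᵢ` a norm-one finitely supported
(discrete) measure, `cent_{B_Y}(F) ≠ ∅` for every nonempty compact `F`, and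
`(C(S), B_Y, K(C(S)))` has property-(P₁).  Each `μᵢ` is encoded by a finitely supported
function `c i : S →₀ ℝ` (a finite combination `∑ αⱼ δ_{sⱼ}` of Dirac measures), its norm
being `∑ |αⱼ|` and its action on `f` being `∑ αⱼ f(sⱼ)`. -/
theorem stmt_13 {S : Type*} [TopologicalSpace S] [CompactSpace S] [T2Space S]
    (n : ℕ) (c : Fin n → (S →₀ ℝ))
    (hnorm : ∀ i, ((c i).sum fun _ a => |a|) = 1)
    (Y : Set C(S, ℝ)) (hY : Y = {f : C(S, ℝ) | ∀ i, ((c i).sum fun s a => a * f s) = 0}) :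
    ∀ F : Set C(S, ℝ), F.Nonempty → IsCompact F →
      (chebCent (Y ∩ closedBall 0 1) F).Nonempty ∧
      ∀ ε > (0 : ℝ), ∃ δ > (0 : ℝ),
        chebCentA (Y ∩ closedBall 0 1) F δ
          ⊆ chebCent (Y ∩ closedBall 0 1) F + ε • closedBall (0 : C(S, ℝ)) 1 :=
  stmt_13_general n c Y hY
end

section
/- Let Y be a closed subspace of a Banach space X. Then Y has the 1½-ball property in X if and only if Y is proximinal in X and for every x ∈ X and every ε ≥ 0, P_Y(x,ε) = {y ∈ Y : d(y, P_Y(x)) ≤ ε}. -/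
/-!
If `Y` has the 1½-ball property and `‖x - y‖ ≤ d(x,Y) + 2c`, intersecting the balls
`B[y, c + δ]` and `B[x, d(x,Y) + c]` halves the excess distance at the cost of a step of length
about `c`. Iterating from an `ε`-approximation gives a Cauchy sequence in `Y` whose limit is a best
approximation within `ε + δ` of the starting point; this yields proximinality and
`P_Y(x,ε) ⊆ {y | d(y, P_Y(x)) ≤ ε}`, the reverse inclusion being the triangle inequality.

Conversely, if `a = ‖x - y‖ > r₂ ≥ d = d(x,Y)`, then `y ∈ P_Y(x, a - d)`, so some best
approximation `p` is nearly within `a - d` of `y`; the point of the segment `[y, p]` at parameter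
`(a - r₂)/(a - d)` lies in both balls.
-/

open Metric Set Pointwise

/-- The set of best approximations `P_Y(x)`. -/
noncomputable def metProj {X : Type*} [NormedAddCommGroup X] (V : Set X) (x : X) : Set X :=
  {v ∈ V | ‖x - v‖ = Metric.infDist x V}

/-- The set of `ε`-near-best approximations `P_Y(x,ε)`. -/
noncomputable def metProjA {X : Type*} [NormedAddCommGroup X] (V : Set X) (x : X) (ε : ℝ) :
    Set X := {v ∈ V | ‖x - v‖ ≤ Metric.infDist x V + ε}

/-- `Y` has the 1½-ball property in `X`. -/
def OneAndHalfBall {X : Type*} [NormedAddCommGroup X] (V : Set X) : Prop :=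
  ∀ y ∈ V, ∀ x : X, ∀ r₁ r₂ : ℝ, 0 < r₁ → 0 < r₂ → ‖x - y‖ < r₁ + r₂ →
    (V ∩ closedBall x r₂).Nonempty → (V ∩ closedBall y r₁ ∩ closedBall x r₂).Nonempty

open Filter Topology

theorem exists_seq_tendsto_of_forall_exists_dist_le {α : Type*} [PseudoMetricSpace α]
    [CompleteSpace α] {F : ℕ → Set α} {r : ℕ → ℝ} (hr : Summable r)
    (hstep : ∀ n, ∀ z ∈ F n, ∃ w ∈ F (n + 1), dist z w ≤ r n) {y : α} (hy : y ∈ F 0) :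
    ∃ u : ℕ → α, (∀ n, u n ∈ F n) ∧ ∃ p, Tendsto u atTop (𝓝 p) ∧
      dist y p ≤ ∑' n, r n := by
  choose! next hnext_mem hnext_dist using hstep
  let u : ℕ → α := fun n => Nat.rec y next n
  have hu_mem : ∀ n, u n ∈ F n := fun n => by
    induction n with
    | zero => exact hy
    | succ n ih => exact hnext_mem n _ ih
  have hu_dist : ∀ n, dist (u n) (u (n + 1)) ≤ r n := fun n => hnext_dist n _ (hu_mem n)
  obtain ⟨p, hp⟩ := cauchySeq_tendsto_of_complete (cauchySeq_of_dist_le_of_summable r hu_dist hr)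
  exact ⟨u, hu_mem, p, hp, dist_le_tsum_of_dist_le_of_tendsto₀ r hu_dist hr hp⟩

section

variable {X : Type*} [NormedAddCommGroup X] {V : Set X} {x y : X}

theorem norm_sub_le_infDist_add_infDist_metProj (hP : (metProj V x).Nonempty) :
    ‖x - y‖ ≤ infDist x V + infDist y (metProj V x) := by
  by_contra! h
  obtain ⟨p, ⟨-, hxp⟩, hyp⟩ :=
    (infDist_lt_iff hP).mp (show infDist y (metProj V x) < ‖x - y‖ - infDist x V by linarith)
  have := norm_sub_le_norm_sub_add_norm_sub x p y
  rw [hxp, ← dist_eq_norm p y, dist_comm p y] at this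
  linarith

theorem OneAndHalfBall.exists_closer (hB : OneAndHalfBall V) (hV : V.Nonempty) (hy : y ∈ V)
    {c δ : ℝ} (hc : 0 < c) (hδ : 0 < δ) (hxy : ‖x - y‖ ≤ infDist x V + 2 * c) :
    ∃ w ∈ V, ‖x - w‖ ≤ infDist x V + c ∧ dist y w ≤ c + δ := by
  have hd := infDist_nonneg (x := x) (s := V)
  obtain ⟨v, hv, hxv⟩ := (infDist_lt_iff hV).mp (lt_add_of_pos_right (infDist x V) hc)
  obtain ⟨w, ⟨hw, hyw⟩, hxw⟩ := hB y hy x (c + δ) (infDist x V + c) (by positivity)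
    (by positivity) (by linarith) ⟨v, hv, by rw [mem_closedBall, dist_comm]; exact hxv.le⟩
  rw [mem_closedBall, dist_eq_norm, norm_sub_rev] at hxw
  exact ⟨w, hw, hxw, by rw [dist_comm]; exact hyw⟩

theorem OneAndHalfBall.exists_metProj_dist_le [CompleteSpace X] (hB : OneAndHalfBall V)
    (hVc : IsClosed V) (hV : V.Nonempty) (hy : y ∈ V) {c δ : ℝ} (hc : 0 < c) (hδ : 0 < δ)
    (hxy : ‖x - y‖ ≤ infDist x V + c) : ∃ p ∈ metProj V x, dist y p ≤ c + δ := by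
  let F : ℕ → Set X := fun n => {z ∈ V | ‖x - z‖ ≤ infDist x V + c / 2 ^ n}
  have hstep : ∀ n, ∀ z ∈ F n, ∃ w ∈ F (n + 1), dist z w ≤ (c + δ) / 2 / 2 ^ n := by
    rintro n z ⟨hz, hxz⟩
    obtain ⟨w, hw, hxw, hzw⟩ := hB.exists_closer hV hz (c := c / 2 / 2 ^ n)
      (δ := δ / 2 / 2 ^ n) (by positivity) (by positivity) (by convert hxz using 2; ring)
    refine ⟨w, ⟨hw, by convert hxw using 2; ring⟩, by convert hzw using 1; ring⟩
  obtain ⟨u, hu, p, hup, hyp⟩ := exists_seq_tendsto_of_forall_exists_dist_le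
    (summable_geometric_two' (c + δ)) hstep (by simpa [F] using ⟨hy, hxy⟩)
  have hp : p ∈ V := hVc.mem_of_tendsto hup (.of_forall fun n => (hu n).1)
  have hxp : ‖x - p‖ ≤ infDist x V := by
    have hbound : Tendsto (fun n : ℕ => infDist x V + c / 2 ^ n) atTop
        (𝓝 (infDist x V)) := by
      simpa using tendsto_const_nhds.add
        (tendsto_const_nhds.div_atTop (tendsto_pow_atTop_atTop_of_one_lt (one_lt_two (α := ℝ))))
    exact le_of_tendsto_of_tendsto' (tendsto_const_nhds.sub hup).norm hbound fun n => (hu n).2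
  refine ⟨p, ⟨hp, hxp.antisymm ?_⟩, (tsum_geometric_two' (c + δ)) ▸ hyp⟩
  rw [← dist_eq_norm]
  exact infDist_le_dist_of_mem hp

theorem OneAndHalfBall.infDist_metProj_le [CompleteSpace X] (hB : OneAndHalfBall V)
    (hVc : IsClosed V) (hV : V.Nonempty) (hy : y ∈ V) {ε : ℝ} (hε : 0 ≤ ε)
    (hxy : ‖x - y‖ ≤ infDist x V + ε) : infDist y (metProj V x) ≤ ε :=
  le_of_forall_pos_le_add fun δ hδ => by
    obtain ⟨p, hp, hyp⟩ := hB.exists_metProj_dist_le hVc hV hy (x := x) (c := ε + δ / 2) (δ := δ / 2)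
      (by positivity) (by positivity) (by linarith)
    exact (infDist_le_dist_of_mem hp).trans (by linarith)

variable [NormedSpace ℝ X]

theorem norm_sub_add_smul_sub_le (x y p : X) {t : ℝ} (ht₀ : 0 ≤ t) (ht₁ : t ≤ 1) :
    ‖x - (y + t • (p - y))‖ ≤ (1 - t) * ‖x - y‖ + t * ‖x - p‖ := by
  have hsplit : x - (y + t • (p - y)) = (1 - t) • (x - y) + t • (x - p) := by module
  rw [hsplit]
  refine (norm_add_le _ _).trans_eq ?_
  rw [norm_smul, norm_smul, Real.norm_of_nonneg (sub_nonneg.mpr ht₁), Real.norm_of_nonneg ht₀]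

theorem oneAndHalfBall_of_infDist_metProj_le (hV : Convex ℝ V)
    (hprox : ∀ x, (metProj V x).Nonempty)
    (hnear : ∀ x ε, 0 ≤ ε → ∀ y ∈ metProjA V x ε, infDist y (metProj V x) ≤ ε) :
    OneAndHalfBall V := by
  rintro y hy x r₁ r₂ hr₁ hr₂ hlt ⟨z, hz, hxz⟩
  have hd : infDist x V ≤ r₂ :=
    (infDist_le_dist_of_mem hz).trans (by rwa [dist_comm, ← mem_closedBall])
  rcases le_or_gt ‖x - y‖ r₂ with hle | hgt
  · exact ⟨y, ⟨hy, mem_closedBall_self hr₁.le⟩, by rwa [mem_closedBall, dist_eq_norm, norm_sub_rev]⟩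
  set a := ‖x - y‖
  set d := infDist x V
  -- chosen so that `(1 - t) * a + t * d = r₂`
  set t := (a - r₂) / (a - d)
  have ht : t * (a - d) = a - r₂ := div_mul_cancel₀ _ (by linarith)
  have ht₀ : 0 < t := div_pos (by linarith) (by linarith)
  have ht₁ : t ≤ 1 := (div_le_one (by linarith)).mpr (by linarith)
  have hyP : infDist y (metProj V x) ≤ a - d := hnear x (a - d) (by linarith) y ⟨hy, by linarith⟩
  have hr₁t : a - d < r₁ / t := by rw [lt_div_iff₀ ht₀]; linarith
  obtain ⟨p, ⟨hp, hxp⟩, hyp⟩ := (infDist_lt_iff (hprox x)).mp (hyP.trans_lt hr₁t)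
  refine ⟨y + t • (p - y), ⟨hV.add_smul_sub_mem hy hp ⟨ht₀.le, ht₁⟩, ?_⟩, ?_⟩
  · rw [dist_eq_norm, norm_sub_rev, lt_div_iff₀' ht₀] at hyp
    rw [mem_closedBall, dist_eq_norm, add_sub_cancel_left, norm_smul, Real.norm_of_nonneg ht₀.le]
    exact hyp.le
  · rw [mem_closedBall, dist_comm, dist_eq_norm]
    calc _ ≤ (1 - t) * a + t * d := (norm_sub_add_smul_sub_le x y p ht₀.le ht₁).trans_eq (by rw [hxp])
      _ = r₂ := by linear_combination -ht

end

/-- `Y` has the 1½-ball property iff `Y` is proximinal and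
`P_Y(x,ε) = {y ∈ Y : d(y,P_Y(x)) ≤ ε}` for all `x` and `ε ≥ 0`. -/
theorem stmt_17 {X : Type*} [NormedAddCommGroup X] [NormedSpace ℝ X] [CompleteSpace X]
    (Y : Submodule ℝ X) (hYc : IsClosed (Y : Set X)) :
    OneAndHalfBall (Y : Set X) ↔
      ((∀ x : X, (metProj (Y : Set X) x).Nonempty) ∧
        ∀ x : X, ∀ ε : ℝ, 0 ≤ ε →
          metProjA (Y : Set X) x ε
            = {y ∈ (Y : Set X) | Metric.infDist y (metProj (Y : Set X) x) ≤ ε}) := by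
  constructor
  · intro hB
    have hY : (Y : Set X).Nonempty := ⟨0, Y.zero_mem⟩
    have hprox : ∀ x, (metProj (Y : Set X) x).Nonempty := fun x => by
      obtain ⟨y, hy, hxy⟩ := (infDist_lt_iff hY).mp (lt_add_one (infDist x (Y : Set X)))
      obtain ⟨p, hp, -⟩ := hB.exists_metProj_dist_le hYc hY hy one_pos one_pos
        (by rw [← dist_eq_norm]; exact hxy.le)
      exact ⟨p, hp⟩
    refine ⟨hprox, fun x ε hε => Subset.antisymm ?_ ?_⟩
    · rintro y ⟨hy, hxy⟩
      exact ⟨hy, hB.infDist_metProj_le hYc hY hy hε hxy⟩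
    · rintro y ⟨hy, hyP⟩
      exact ⟨hy, (norm_sub_le_infDist_add_infDist_metProj (hprox x)).trans (by linarith)⟩
  · rintro ⟨hprox, hform⟩
    exact oneAndHalfBall_of_infDist_metProj_le Y.convex hprox
      fun x ε hε y hy => (hform x ε hε ▸ hy).2
end

section
/- In Garkavi's renormed space: let X be a non-reflexive Banach space, Y = ker(x*) a closed hyperplane, and let X' be X equipped with the equivalent norm ‖·‖_B whose unit ball is B = closed convex hull of U ∪ V ∪ (−V), where U = {y ∈ B_Y : |Φ(y)| ≤ α}, V = x₀ + B_γ, B_γ = B[0,γ] ∩ Y, Φ ∈ Y* is a norm-one functional not attaining its norm on B_Y, x*(x₀) = 1, and γ > 0, y₀, α are chosen as in Garkavi's construction. Then Y satisfies the 1½-ball property in X'. In particular, for every ε ≥ 0 and y ∈ Y with ‖y − x₀‖_B ≤ 1 + ε, one has d(y, B_γ) ≤ ε (distances in ‖·‖_B). -/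
open Metric Set Pointwise NormedSpace Filter Topology

/-!
Write `N` for the gauge of `B`. Since `B` lies in the slab `|x*| ≤ 1` and contains the cylinder
`[-x₀, x₀] + B_γ`, a neighbourhood of `0`, taking the closure does not change `N`, and
`|x* x| ≤ N (x - z)` for `z ∈ Y`. A point `w` of `conv (U ∪ V ∪ -V)` is `a u + b (τ x₀ + p)` with
`u ∈ conv U`, `p ∈ B_γ`, `|τ| ≤ 1`, `a + b = 1`, and `m = a u + b (1 - |τ|) p ∈ Y` satisfies
`N (w - m) ≤ b |τ| = |x* w|` and `N m ≤ 1 - |x* w|`. Applied to a rescaling of `x - y`, this gives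
`m ∈ Y` with `N m < r₁ + (r₂ - |x* x|)`, and `z = y + θ m` for a suitable `θ ∈ [0, 1]` is the
required point. If `z ∈ Y` and `N (x₀ - z) < ρ`, the same decomposition of `x₀ - z = ρ w` has
`ρ b ≥ 1`, so the weight `ρ a ≤ ρ - 1` of `U` vanishes as `ρ ↓ 1`: hence `P_Y(x₀) = B_γ`.
-/

section Gauge

variable {E : Type*} [AddCommGroup E] [Module ℝ E]

theorem abs_apply_le_gauge {s : Set E} (hs : Absorbent ℝ s) {f : E →ₗ[ℝ] ℝ}
    (hf : ∀ x ∈ s, |f x| ≤ 1) (x : E) : |f x| ≤ gauge s x := by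
  refine le_of_forall_gt fun ρ hρ => ?_
  obtain ⟨r, hr₀, hrρ, w, hw, rfl⟩ := exists_lt_of_gauge_lt hs hρ
  rw [map_smul, smul_eq_mul, abs_mul, abs_of_pos hr₀]
  nlinarith [hf w hw]

variable [TopologicalSpace E] [IsTopologicalAddGroup E] [ContinuousSMul ℝ E]

theorem gauge_closure_of_convex {s : Set E} (hc : Convex ℝ s) (hs₀ : s ∈ 𝓝 0) :
    gauge (closure s) = gauge s := by
  refine le_antisymm (gauge_mono (absorbent_nhds_zero hs₀) subset_closure) fun x => ?_
  refine le_of_forall_gt fun ρ hρ => ?_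
  have hρ₀ : 0 < ρ := (gauge_nonneg x).trans_lt hρ
  have hscale : ∀ t : Set E, gauge t (ρ⁻¹ • x) < 1 ↔ gauge t x < ρ := fun t => by
    rw [gauge_smul_of_nonneg (inv_nonneg.2 hρ₀.le), smul_eq_mul, inv_mul_lt_one₀ hρ₀]
  rw [← hscale, gauge_lt_one_iff_mem_interior hc hs₀,
    ← hc.interior_closure_eq_interior_of_nonempty_interior ⟨0, mem_interior_iff_mem_nhds.2 hs₀⟩,
    ← gauge_lt_one_iff_mem_interior hc.closure (mem_of_superset hs₀ subset_closure), hscale]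
  exact hρ

end Gauge

section Garkavi

variable {E : Type*} [NormedAddCommGroup E] [NormedSpace ℝ E]

/-- For `f x₀ = 1` this is `[-x₀, x₀] + B_γ`, the convex hull of `V ∪ -V`. -/
def garkaviCylinder (f : StrongDual ℝ E) (x₀ : E) (γ : ℝ) : Set E :=
  {x | |f x| ≤ 1 ∧ ‖x - f x • x₀‖ ≤ γ}

/-- Garkavi's ball `B` is the closure of this set (see `gauge_closure_of_convex`). -/
def garkaviHull (f : StrongDual ℝ E) (x₀ : E) (γ : ℝ) (U : Set E) : Set E :=
  convexHull ℝ
    (U ∪ (fun z => x₀ + z) '' ((LinearMap.ker (f : E →ₗ[ℝ] ℝ) : Set E) ∩ closedBall 0 γ) ∪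
      -((fun z => x₀ + z) '' ((LinearMap.ker (f : E →ₗ[ℝ] ℝ) : Set E) ∩ closedBall 0 γ)))

variable {f : StrongDual ℝ E} {x₀ : E} {γ : ℝ} {U : Set E}

theorem mem_ker_iff {z : E} : z ∈ LinearMap.ker (f : E →ₗ[ℝ] ℝ) ↔ f z = 0 := by
  simp

theorem apply_eq_zero_of_mem_convexHull (hUY : ∀ u ∈ U, f u = 0) {u : E}
    (hu : u ∈ convexHull ℝ U) : f u = 0 :=
  mem_ker_iff.1 (convexHull_min (fun u hu => mem_ker_iff.2 (hUY u hu)) (Submodule.convex _) hu)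

theorem convex_garkaviHull : Convex ℝ (garkaviHull f x₀ γ U) :=
  convex_convexHull ℝ _

theorem convex_garkaviCylinder : Convex ℝ (garkaviCylinder f x₀ γ) := by
  intro x ⟨hx₁, hx₂⟩ y ⟨hy₁, hy₂⟩ a b ha hb hab
  refine ⟨?_, ?_⟩
  · calc |f (a • x + b • y)| = |a * f x + b * f y| := by simp
      _ ≤ a * |f x| + b * |f y| := by
        refine (abs_add_le _ _).trans_eq ?_
        rw [abs_mul, abs_mul, abs_of_nonneg ha, abs_of_nonneg hb]
      _ ≤ 1 := by nlinarith
  · calc ‖a • x + b • y - f (a • x + b • y) • x₀‖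
        = ‖a • (x - f x • x₀) + b • (y - f y • x₀)‖ := by
          simp only [map_add, map_smul, smul_eq_mul]; congr 1; module
      _ ≤ a * ‖x - f x • x₀‖ + b * ‖y - f y • x₀‖ := by
        refine (norm_add_le _ _).trans_eq ?_
        rw [norm_smul, norm_smul, Real.norm_of_nonneg ha, Real.norm_of_nonneg hb]
      _ ≤ a * γ + b * γ := by gcongr
      _ = γ := by rw [← add_mul, hab, one_mul]

theorem garkaviCylinder_mem_nhds (hγ : 0 < γ) : garkaviCylinder f x₀ γ ∈ 𝓝 0 := by
  have h₁ : (fun x => |f x|) ⁻¹' Iic 1 ∈ 𝓝 (0 : E) :=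
    (by fun_prop : Continuous fun x => |f x|).continuousAt.preimage_mem_nhds
      (by simpa using Iic_mem_nhds one_pos)
  have h₂ : (fun x => ‖x - f x • x₀‖) ⁻¹' Iic γ ∈ 𝓝 (0 : E) :=
    (by fun_prop : Continuous fun x => ‖x - f x • x₀‖).continuousAt.preimage_mem_nhds
      (by simpa using Iic_mem_nhds hγ)
  exact inter_mem h₁ h₂

theorem smul_add_mem_garkaviCylinder (hx₀ : f x₀ = 1) {τ : ℝ} {z : E} (hτ : |τ| ≤ 1)
    (hz : f z = 0) (hzγ : ‖z‖ ≤ γ) : τ • x₀ + z ∈ garkaviCylinder f x₀ γ := by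
  simpa [garkaviCylinder, hx₀, hz] using ⟨hτ, hzγ⟩

theorem add_mem_garkaviHull {p : E} (hp : f p = 0) (hpγ : ‖p‖ ≤ γ) :
    x₀ + p ∈ garkaviHull f x₀ γ U :=
  subset_convexHull ℝ _
    (Or.inl (Or.inr ⟨p, ⟨mem_ker_iff.2 hp, mem_closedBall_zero_iff.2 hpγ⟩, rfl⟩))

theorem neg_add_mem_garkaviHull {p : E} (hp : f p = 0) (hpγ : ‖p‖ ≤ γ) :
    -(x₀ + p) ∈ garkaviHull f x₀ γ U :=
  subset_convexHull ℝ _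
    (Or.inr ⟨p, ⟨mem_ker_iff.2 hp, mem_closedBall_zero_iff.2 hpγ⟩, (neg_neg _).symm⟩)

theorem garkaviCylinder_subset_garkaviHull (hx₀ : f x₀ = 1) :
    garkaviCylinder f x₀ γ ⊆ garkaviHull f x₀ γ U := by
  rintro x ⟨hτ, hp⟩
  have hp₀ : f (x - f x • x₀) = 0 := by simp [hx₀]
  have hτ' := abs_le.1 hτ
  have hx : ((1 + f x) / 2) • (x₀ + (x - f x • x₀)) +
      ((1 - f x) / 2) • -(x₀ + -(x - f x • x₀)) = x := by module
  exact hx ▸ convex_convexHull ℝ _ (add_mem_garkaviHull hp₀ hp)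
    (neg_add_mem_garkaviHull (by rw [map_neg, hp₀, neg_zero]) ((norm_neg _).trans_le hp))
    (by linarith) (by linarith) (by ring)

theorem garkaviHull_mem_nhds (hx₀ : f x₀ = 1) (hγ : 0 < γ) : garkaviHull f x₀ γ U ∈ 𝓝 0 :=
  mem_of_superset (garkaviCylinder_mem_nhds hγ) (garkaviCylinder_subset_garkaviHull hx₀)

theorem garkaviHull_subset_convexJoin (hx₀ : f x₀ = 1) (hγ : 0 ≤ γ) (hU : U.Nonempty) :
    garkaviHull f x₀ γ U ⊆ convexJoin ℝ (convexHull ℝ U) (garkaviCylinder f x₀ γ) := by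
  have h₀ : (0 : E) ∈ garkaviCylinder f x₀ γ := by
    simpa using
      smul_add_mem_garkaviCylinder (τ := 0) hx₀ (by simp) (map_zero f) (by simpa using hγ)
  refine convexHull_min ?_ ((convex_convexHull ℝ U).convexJoin convex_garkaviCylinder)
  rintro x ((hx | ⟨p, ⟨hp, hpγ⟩, rfl⟩) | ⟨p, ⟨hp, hpγ⟩, hx⟩)
  · exact subset_convexJoin_left ⟨0, h₀⟩ (subset_convexHull ℝ U hx)
  · refine subset_convexJoin_right hU.convexHull ?_
    simpa using smul_add_mem_garkaviCylinder (τ := 1) hx₀ (by simp) (mem_ker_iff.1 hp)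
      (mem_closedBall_zero_iff.1 hpγ)
  · refine subset_convexJoin_right hU.convexHull ?_
    have hx' : x = (-1 : ℝ) • x₀ + -p := by
      rw [neg_eq_iff_eq_neg.1 (show x₀ + p = -x from hx).symm]; module
    rw [hx']
    exact smul_add_mem_garkaviCylinder hx₀ (by simp) (by simpa using mem_ker_iff.1 hp)
      (by simpa using mem_closedBall_zero_iff.1 hpγ)

theorem abs_apply_le_one_of_mem_garkaviHull (hx₀ : f x₀ = 1) (hUY : ∀ u ∈ U, f u = 0) {x : E}
    (hx : x ∈ garkaviHull f x₀ γ U) : |f x| ≤ 1 := by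
  refine abs_le.2
    (convexHull_min ?_ ((convex_Icc (-1 : ℝ) 1).linear_preimage (f : E →ₗ[ℝ] ℝ)) hx)
  rintro x ((hx | ⟨p, ⟨hp, -⟩, rfl⟩) | ⟨p, ⟨hp, -⟩, hx⟩)
  · simp [hUY x hx]
  · simp [mem_ker_iff.1 hp, hx₀]
  · have hx' : x = -(x₀ + p) := neg_eq_iff_eq_neg.1 (show x₀ + p = -x from hx).symm
    have : f x = -1 := by simp [hx', mem_ker_iff.1 hp, hx₀]
    simp [this]

theorem neg_mem_garkaviHull (hU : ∀ u ∈ U, -u ∈ U) {x : E} (hx : x ∈ garkaviHull f x₀ γ U) :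
    -x ∈ garkaviHull f x₀ γ U := by
  unfold garkaviHull at hx ⊢
  refine convexHull_mono ?_ (by rw [convexHull_neg]; exact neg_mem_neg.2 hx)
  rintro y ((hy | hy) | hy)
  · exact Or.inl (Or.inl (neg_neg y ▸ hU _ hy))
  · exact Or.inr hy
  · exact Or.inl (Or.inr (neg_neg y ▸ hy))

theorem gauge_smul_add_abs_smul_le {p : E} (hp : f p = 0) (hpγ : ‖p‖ ≤ γ) (τ : ℝ) :
    gauge (garkaviHull f x₀ γ U) (τ • x₀ + |τ| • p) ≤ |τ| := by
  rcases le_total 0 τ with hτ | hτ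
  · rw [abs_of_nonneg hτ, ← smul_add]
    exact gauge_le_of_mem hτ (smul_mem_smul_set (add_mem_garkaviHull hp hpγ))
  · have : τ • x₀ + |τ| • p = |τ| • -(x₀ + -p) := by rw [abs_of_nonpos hτ]; module
    rw [this]
    exact gauge_le_of_mem (abs_nonneg τ) (smul_mem_smul_set
      (neg_add_mem_garkaviHull (by simp [hp]) (by simpa using hpγ)))

theorem exists_ker_gauge_add_abs_le (hx₀ : f x₀ = 1) (hγ : 0 < γ) (hU₀ : (0 : E) ∈ U)
    (hUY : ∀ u ∈ U, f u = 0) {w : E} (hw : w ∈ garkaviHull f x₀ γ U) :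
    ∃ m, f m = 0 ∧ gauge (garkaviHull f x₀ γ U) m + |f w| ≤ 1 ∧
      gauge (garkaviHull f x₀ γ U) (w - m) ≤ |f w| := by
  set N := gauge (garkaviHull f x₀ γ U)
  have habs : Absorbent ℝ (garkaviHull f x₀ γ U) :=
    absorbent_nhds_zero (garkaviHull_mem_nhds hx₀ hγ)
  obtain ⟨u, hu, s, ⟨hτ, hpγ⟩, a, b, ha, hb, hab, rfl⟩ :=
    mem_convexJoin.1 (garkaviHull_subset_convexJoin hx₀ hγ.le ⟨0, hU₀⟩ hw)
  set τ := f s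
  set p := s - τ • x₀
  have hu₀ : f u = 0 := apply_eq_zero_of_mem_convexHull hUY hu
  have hp₀ : f p = 0 := by simp [p, τ, hx₀]
  have hfw : |f (a • u + b • s)| = b * |τ| := by simp [τ, hu₀, abs_mul, abs_of_nonneg hb]
  have hc : 0 ≤ b * (1 - |τ|) := mul_nonneg hb (by linarith)
  refine ⟨a • u + (b * (1 - |τ|)) • p, by simp [hu₀, hp₀], ?_, ?_⟩
  · have hNu : N u ≤ 1 := gauge_le_one_of_mem
      (convexHull_mono (subset_union_left.trans subset_union_left) hu)
    have hNp : N p ≤ 1 := gauge_le_one_of_mem (garkaviCylinder_subset_garkaviHull hx₀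
      (by simpa using smul_add_mem_garkaviCylinder (τ := 0) hx₀ (by simp) hp₀ hpγ))
    calc N (a • u + (b * (1 - |τ|)) • p) + |f (a • u + b • s)|
        ≤ a * N u + b * (1 - |τ|) * N p + b * |τ| := by
          rw [hfw, ← smul_eq_mul a, ← smul_eq_mul (b * (1 - |τ|)), ← gauge_smul_of_nonneg ha,
            ← gauge_smul_of_nonneg hc]
          gcongr
          exact gauge_add_le convex_garkaviHull habs _ _
      _ ≤ 1 := by
          nlinarith [mul_le_mul_of_nonneg_left hNu ha, mul_le_mul_of_nonneg_left hNp hc]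
  · have : a • u + b • s - (a • u + (b * (1 - |τ|)) • p) = b • (τ • x₀ + |τ| • p) := by
      simp only [p]; module
    rw [this, hfw]
    refine (gauge_smul_of_nonneg hb _).trans_le ?_
    exact mul_le_mul_of_nonneg_left (gauge_smul_add_abs_smul_le hp₀ hpγ τ) hb

theorem exists_ker_gauge_add_abs_lt (hx₀ : f x₀ = 1) (hγ : 0 < γ) (hU₀ : (0 : E) ∈ U)
    (hUY : ∀ u ∈ U, f u = 0) {v : E} {R : ℝ} (hv : gauge (garkaviHull f x₀ γ U) v < R) :
    ∃ m, f m = 0 ∧ gauge (garkaviHull f x₀ γ U) m + |f v| < R ∧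
      gauge (garkaviHull f x₀ γ U) (v - m) ≤ |f v| := by
  obtain ⟨ρ, hρ₀, hρR, w, hw, rfl⟩ :=
    exists_lt_of_gauge_lt (absorbent_nhds_zero (garkaviHull_mem_nhds hx₀ hγ)) hv
  obtain ⟨m, hm, hmw, hwm⟩ := exists_ker_gauge_add_abs_le hx₀ hγ hU₀ hUY hw
  have hfv : |f (ρ • w)| = ρ * |f w| := by simp [abs_mul, abs_of_pos hρ₀]
  refine ⟨ρ • m, by simp [hm], ?_, ?_⟩
  · rw [gauge_smul_of_nonneg hρ₀.le, smul_eq_mul, hfv]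
    nlinarith
  · rw [← smul_sub, gauge_smul_of_nonneg hρ₀.le, smul_eq_mul, hfv]
    exact mul_le_mul_of_nonneg_left hwm hρ₀.le

theorem exists_gauge_le_of_gauge_lt_add (hx₀ : f x₀ = 1) (hγ : 0 < γ) (hU₀ : (0 : E) ∈ U)
    (hUY : ∀ u ∈ U, f u = 0) (hUneg : ∀ u ∈ U, -u ∈ U) {x y : E} (hy : f y = 0) {r₁ r₂ : ℝ}
    (hr₁ : 0 < r₁) (hfx : |f x| ≤ r₂) (hxy : gauge (garkaviHull f x₀ γ U) (x - y) < r₁ + r₂) :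
    ∃ z, f z = 0 ∧ gauge (garkaviHull f x₀ γ U) (y - z) ≤ r₁ ∧
      gauge (garkaviHull f x₀ γ U) (x - z) ≤ r₂ := by
  obtain ⟨m, hm, hmK, hrest⟩ := exists_ker_gauge_add_abs_lt hx₀ hγ hU₀ hUY hxy
  rw [show f (x - y) = f x by simp [hy]] at hmK hrest
  set K := r₁ + r₂ - |f x|
  have hK : 0 < K := by linarith
  set θ := r₁ / K
  have hθK : θ * K = r₁ := div_mul_cancel₀ _ hK.ne'
  have hθ₀ : 0 ≤ θ := by positivity
  have hθ₁ : θ ≤ 1 := (div_le_one hK).2 (by linarith)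
  refine ⟨y + θ • m, by simp [hy, hm], ?_, ?_⟩
  · rw [show y - (y + θ • m) = -(θ • m) by abel, gauge_neg (fun _ => neg_mem_garkaviHull hUneg),
      gauge_smul_of_nonneg hθ₀, smul_eq_mul]
    nlinarith
  · calc gauge (garkaviHull f x₀ γ U) (x - (y + θ • m))
        ≤ gauge (garkaviHull f x₀ γ U) (x - y - m) +
            gauge (garkaviHull f x₀ γ U) ((1 - θ) • m) := by
          rw [show x - (y + θ • m) = (x - y - m) + (1 - θ) • m by module]
          exact gauge_add_le convex_garkaviHull
            (absorbent_nhds_zero (garkaviHull_mem_nhds hx₀ hγ)) _ _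
      _ ≤ |f x| + (1 - θ) * K := by
          rw [gauge_smul_of_nonneg (by linarith), smul_eq_mul]
          gcongr
          linarith
      _ = r₂ := by rw [sub_mul, one_mul, hθK]; ring

theorem norm_le_of_sub_eq_smul (hx₀ : f x₀ = 1) (hγ : 0 ≤ γ) (hU₀ : (0 : E) ∈ U)
    (hUY : ∀ u ∈ U, f u = 0) (hU₁ : U ⊆ closedBall 0 1) {z w : E} {ρ : ℝ} (hρ : 0 ≤ ρ)
    (hz : f z = 0) (hw : w ∈ garkaviHull f x₀ γ U) (hzw : ρ • w = x₀ - z) :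
    ‖z‖ ≤ ρ - 1 + ρ * γ := by
  obtain ⟨u, hu, s, ⟨hτ, hpγ⟩, a, b, ha, hb, hab, rfl⟩ :=
    mem_convexJoin.1 (garkaviHull_subset_convexJoin hx₀ hγ ⟨0, hU₀⟩ hw)
  have hu₀ : f u = 0 := apply_eq_zero_of_mem_convexHull hUY hu
  have hu₁ : ‖u‖ ≤ 1 := mem_closedBall_zero_iff.1 (convexHull_min hU₁ (convex_closedBall 0 1) hu)
  have hfs : ρ * b * f s = 1 := by
    have := congrArg f hzw
    simp only [map_smul, map_add, map_sub, smul_eq_mul, hu₀, hx₀, hz] at this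
    linarith
  have hρb : 1 ≤ ρ * b := by nlinarith [le_abs_self (f s), mul_nonneg hρ hb]
  have hz' : z = -((ρ * a) • u + (ρ * b) • (s - f s • x₀)) := by
    linear_combination (norm := module) hzw - hfs • x₀
  calc ‖z‖ ≤ ρ * a * ‖u‖ + ρ * b * ‖s - f s • x₀‖ := by
        rw [hz', norm_neg]
        refine (norm_add_le _ _).trans_eq ?_
        rw [norm_smul, norm_smul, Real.norm_of_nonneg (mul_nonneg hρ ha),
          Real.norm_of_nonneg (mul_nonneg hρ hb)]
    _ ≤ ρ * a + ρ * b * γ := add_le_add (mul_le_of_le_one_right (mul_nonneg hρ ha) hu₁)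
        (mul_le_mul_of_nonneg_left hpγ (mul_nonneg hρ hb))
    _ ≤ ρ - 1 + ρ * γ := by nlinarith [mul_nonneg hρ hγ]

theorem norm_le_of_gauge_sub_le_one (hx₀ : f x₀ = 1) (hγ : 0 < γ) (hU₀ : (0 : E) ∈ U)
    (hUY : ∀ u ∈ U, f u = 0) (hU₁ : U ⊆ closedBall 0 1) {z : E} (hz : f z = 0)
    (hxz : gauge (garkaviHull f x₀ γ U) (x₀ - z) ≤ 1) : ‖z‖ ≤ γ := by
  refine le_of_forall_pos_lt_add fun ε hε => ?_
  set R := 1 + ε / (1 + γ)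
  obtain ⟨ρ, hρ₀, hρR, w, hw, hzw⟩ :=
    exists_lt_of_gauge_lt (absorbent_nhds_zero (garkaviHull_mem_nhds hx₀ hγ))
      (hxz.trans_lt (show 1 < R from lt_add_of_pos_right 1 (by positivity)))
  calc ‖z‖ ≤ ρ - 1 + ρ * γ := norm_le_of_sub_eq_smul hx₀ hγ.le hU₀ hUY hU₁ hρ₀.le hz hw hzw
    _ < R - 1 + R * γ := by nlinarith
    _ = γ + ε := by simp only [R]; field_simp; ring

theorem iInf_gauge_sub_le (hx₀ : f x₀ = 1) (hγ : 0 < γ) (hU₀ : (0 : E) ∈ U)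
    (hUY : ∀ u ∈ U, f u = 0) (hU₁ : U ⊆ closedBall 0 1) (hUneg : ∀ u ∈ U, -u ∈ U) {y : E}
    (hy : f y = 0) {ε : ℝ} (hε : 0 ≤ ε) (hyx : gauge (garkaviHull f x₀ γ U) (y - x₀) ≤ 1 + ε) :
    ⨅ u : ((LinearMap.ker (f : E →ₗ[ℝ] ℝ) : Set E) ∩ closedBall 0 γ : Set E),
      gauge (garkaviHull f x₀ γ U) (y - u) ≤ ε := by
  refine le_of_forall_pos_le_add fun δ hδ => ?_
  have hxy : gauge (garkaviHull f x₀ γ U) (x₀ - y) < ε + δ + 1 := by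
    rw [← neg_sub, gauge_neg (fun _ => neg_mem_garkaviHull hUneg)]
    linarith
  obtain ⟨z, hz, hyz, hxz⟩ :=
    exists_gauge_le_of_gauge_lt_add hx₀ hγ hU₀ hUY hUneg hy (by positivity) (by simp [hx₀]) hxy
  have hzγ : z ∈ (LinearMap.ker (f : E →ₗ[ℝ] ℝ) : Set E) ∩ closedBall 0 γ :=
    ⟨mem_ker_iff.2 hz,
      mem_closedBall_zero_iff.2 (norm_le_of_gauge_sub_le_one hx₀ hγ hU₀ hUY hU₁ hz hxz)⟩
  exact (ciInf_le ⟨0, by rintro _ ⟨u, rfl⟩; exact gauge_nonneg _⟩ ⟨z, hzγ⟩).trans hyz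

end Garkavi

theorem stmt_18_general {X : Type*} [NormedAddCommGroup X] [NormedSpace ℝ X]
    (xstar : StrongDual ℝ X)
    (Y : Submodule ℝ X) (hYdef : Y = LinearMap.ker (xstar : X →ₗ[ℝ] ℝ))
    (Φ : StrongDual ℝ Y)
    (D : Set Y) (hD : D = {y : Y | ‖y‖ ≤ 1 ∧ 3 / 4 ≤ Φ y})
    (γ : ℝ) (hγ : 0 < γ) (y₀ : Y)
    (hball : closedBall y₀ γ ⊆ interior D)
    (α : ℝ) (hα : α = ⨅ y : (closedBall y₀ γ : Set Y), Φ y.1)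
    (x₀ : X) (hx₀ : xstar x₀ = 1)
    (Bγ : Set X) (hBγ : Bγ = (Y : Set X) ∩ closedBall 0 γ)
    (U : Set X) (hU : U = {x : X | ∃ y : Y, (y : X) = x ∧ ‖x‖ ≤ 1 ∧ |Φ y| ≤ α})
    (V : Set X) (hV : V = (fun z => x₀ + z) '' Bγ)
    (B : Set X) (hB : B = closure (convexHull ℝ (U ∪ V ∪ (-V)))) :
    (∀ y ∈ (Y : Set X), ∀ x : X, ∀ r₁ r₂ : ℝ, 0 < r₁ → 0 < r₂ →
        gauge B (x - y) < r₁ + r₂ →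
        (∃ z ∈ (Y : Set X), gauge B (x - z) ≤ r₂) →
        ∃ z ∈ (Y : Set X), gauge B (y - z) ≤ r₁ ∧ gauge B (x - z) ≤ r₂) ∧
      ∀ ε : ℝ, 0 ≤ ε → ∀ y ∈ (Y : Set X), gauge B (y - x₀) ≤ 1 + ε →
        ⨅ u : Bγ, gauge B (y - (u : X)) ≤ ε := by
  subst hYdef hBγ hV
  replace hB : B = closure (garkaviHull xstar x₀ γ U) := hB
  subst hB
  have hα₀ : 0 ≤ α := hα ▸ Real.iInf_nonneg fun y => by
    have hy := interior_subset (hball y.2)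
    rw [hD] at hy
    linarith [hy.2]
  have hU₀ : (0 : X) ∈ U := hU ▸ ⟨0, rfl, by simp, by simpa using hα₀⟩
  have hUY : ∀ u ∈ U, xstar u = 0 := by
    rw [hU]
    rintro _ ⟨y, rfl, -⟩
    exact mem_ker_iff.1 y.2
  have hU₁ : U ⊆ closedBall 0 1 := by
    rw [hU]
    rintro _ ⟨y, rfl, hy, -⟩
    exact mem_closedBall_zero_iff.2 hy
  have hUneg : ∀ u ∈ U, -u ∈ U := by
    rw [hU]
    rintro _ ⟨y, rfl, hy, hΦy⟩
    exact ⟨-y, rfl, by simpa using hy, by simpa using hΦy⟩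
  rw [gauge_closure_of_convex convex_garkaviHull (garkaviHull_mem_nhds hx₀ hγ)]
  refine ⟨fun y hy x r₁ r₂ hr₁ _ hxy ⟨z₀, hz₀, hxz₀⟩ => ?_, fun ε hε y hy hyx => ?_⟩
  · have hfx : |xstar x| ≤ r₂ := by
      simpa [mem_ker_iff.1 hz₀] using (abs_apply_le_gauge
        (absorbent_nhds_zero (garkaviHull_mem_nhds hx₀ hγ))
        (fun _ => abs_apply_le_one_of_mem_garkaviHull hx₀ hUY) (x - z₀)).trans hxz₀
    obtain ⟨z, hz, hyz, hxz⟩ :=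
      exists_gauge_le_of_gauge_lt_add hx₀ hγ hU₀ hUY hUneg (mem_ker_iff.1 hy) hr₁ hfx hxy
    exact ⟨z, mem_ker_iff.2 hz, hyz, hxz⟩
  · exact iInf_gauge_sub_le hx₀ hγ hU₀ hUY hU₁ hUneg (mem_ker_iff.1 hy) hε hyx

/-- in Garkavi's renormed space `X' = (X, ‖·‖_B)` (the norm `‖·‖_B` being the
Minkowski functional `gauge B` of the set `B`), the hyperplane `Y = ker x*` satisfies the
1½-ball property; in particular for every `ε ≥ 0` and `y ∈ Y` with `‖y - x₀‖_B ≤ 1 + ε`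
one has `d_B(y, B_γ) ≤ ε`. -/
theorem stmt_18 {X : Type*} [NormedAddCommGroup X] [NormedSpace ℝ X] [CompleteSpace X]
    (hnr : ¬ Function.Surjective ⇑(inclusionInDoubleDual ℝ X))
    (xstar : StrongDual ℝ X) (hxs : xstar ≠ 0)
    (Y : Submodule ℝ X) (hYdef : Y = LinearMap.ker (xstar : X →ₗ[ℝ] ℝ))
    (Φ : StrongDual ℝ Y) (hΦ : ‖Φ‖ = 1) (hna : ∀ y : Y, ‖y‖ ≤ 1 → |Φ y| < 1)
    (D : Set Y) (hD : D = {y : Y | ‖y‖ ≤ 1 ∧ 3 / 4 ≤ Φ y})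
    (γ : ℝ) (hγ : 0 < γ) (y₀ : Y) (hy₀ : y₀ ∈ D)
    (hball : closedBall y₀ γ ⊆ interior D)
    (α : ℝ) (hα : α = ⨅ y : (closedBall y₀ γ : Set Y), Φ y.1)
    (x₀ : X) (hx₀ : xstar x₀ = 1)
    (Bγ : Set X) (hBγ : Bγ = (Y : Set X) ∩ closedBall 0 γ)
    (U : Set X) (hU : U = {x : X | ∃ y : Y, (y : X) = x ∧ ‖x‖ ≤ 1 ∧ |Φ y| ≤ α})
    (V : Set X) (hV : V = (fun z => x₀ + z) '' Bγ)
    (B : Set X) (hB : B = closure (convexHull ℝ (U ∪ V ∪ (-V)))) :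
    (∀ y ∈ (Y : Set X), ∀ x : X, ∀ r₁ r₂ : ℝ, 0 < r₁ → 0 < r₂ →
        gauge B (x - y) < r₁ + r₂ →
        (∃ z ∈ (Y : Set X), gauge B (x - z) ≤ r₂) →
        ∃ z ∈ (Y : Set X), gauge B (y - z) ≤ r₁ ∧ gauge B (x - z) ≤ r₂) ∧
      ∀ ε : ℝ, 0 ≤ ε → ∀ y ∈ (Y : Set X), gauge B (y - x₀) ≤ 1 + ε →
        ⨅ u : Bγ, gauge B (y - (u : X)) ≤ ε :=
  stmt_18_general xstar Y hYdef Φ D hD γ hγ y₀ hball α hα x₀ hx₀ Bγ hBγ U hU V hV B hB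
end

section
/- With notation from Garkavi's construction: if η > 1, y ∈ Y and (y − x₀)/η lies in B = closure of conv(U ∪ V ∪ (−V)), then writing (y−x₀)/η as a limit of convex combinations αₙuₙ + βₙu'ₙ + νₙyₙ + (αₙ−βₙ)x₀ with uₙ,u'ₙ ∈ B_γ, yₙ ∈ U, one obtains in the limit β − α = 1/η, and consequently d_{‖·‖_B}(y, B_γ) ≤ η − 1. -/
/-! A point of `conv (U ∪ V ∪ -V)` is `z = ν y' + a (x₀ + b₁) - q (x₀ + b₂)` with `y' ∈ U`,
`bᵢ ∈ B_γ`, and then `η z + x₀ + b₂ = (η ν) y' + (η a) (x₀ + b₁) + (1 - η q) (x₀ + b₂)` has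
gauge at most `η (1 - q) + |1 - η q| ≤ η - 1 + 2 |x* (η z + x₀)|`. Since the gauge of a convex
neighbourhood of `0` is Lipschitz, so is the `‖·‖_B`-distance to `B_γ`, and the bound passes to
`z ∈ B`. For `z = (y - x₀) / η` we get `η z + x₀ = y ∈ ker x*`. -/

open Metric Set Pointwise Topology

section Gauge

variable {E : Type*} [NormedAddCommGroup E] [NormedSpace ℝ E] {s : Set E}

lemma gauge_smul_le_of_mem {v : E} (hv : v ∈ s) {c : ℝ} (hc : 0 ≤ c) : gauge s (c • v) ≤ c := by
  rw [gauge_smul_of_nonneg hc, smul_eq_mul]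
  exact mul_le_of_le_one_right hc (gauge_le_one_of_mem hv)

lemma gauge_smul_le_abs {v : E} (hv : v ∈ s) (hnv : -v ∈ s) (c : ℝ) : gauge s (c • v) ≤ |c| := by
  rcases le_total 0 c with hc | hc
  · exact (abs_of_nonneg hc).symm ▸ gauge_smul_le_of_mem hv hc
  · rw [← neg_smul_neg, abs_of_nonpos hc]
    exact gauge_smul_le_of_mem hnv (neg_nonneg.2 hc)

lemma continuous_iInf_gauge_sub (hs : Convex ℝ s) (hs₀ : s ∈ 𝓝 0) (t : Set E) [Nonempty t] :
    Continuous fun w => ⨅ u : t, gauge s (w - u) := by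
  obtain ⟨r, hr, hball⟩ := Metric.mem_nhds_iff.1 hs₀
  refine (LipschitzWith.of_le_add_mul' r⁻¹ fun w w' => ?_).continuous
  have hgauge : gauge s (w - w') ≤ r⁻¹ * dist w w' := by
    rw [dist_eq_norm, inv_mul_eq_div, le_div_iff₀' hr]
    exact mul_gauge_le_norm hball
  rw [← sub_le_iff_le_add]
  refine le_ciInf fun u => ?_
  have htri := gauge_add_le hs (absorbent_nhds_zero hs₀) (w - w') (w' - u)
  rw [sub_add_sub_cancel] at htri
  have hinf : ⨅ u : t, gauge s (w - u) ≤ gauge s (w - u) :=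
    ciInf_le ⟨0, forall_mem_range.2 fun _ => gauge_nonneg _⟩ u
  linarith

end Gauge

section Garkavi

variable {E : Type*} [NormedAddCommGroup E] [NormedSpace ℝ E]

lemma convex_setOf_exists_coe_eq_norm_le_abs_le (Y : Submodule ℝ E) (Φ : StrongDual ℝ Y)
    (α : ℝ) :
    Convex ℝ {x : E | ∃ y : Y, (y : E) = x ∧ ‖x‖ ≤ 1 ∧ |Φ y| ≤ α} := by
  have hconv : Convex ℝ (closedBall (0 : Y) 1 ∩ Φ ⁻¹' Icc (-α) α) :=
    (convex_closedBall 0 1).inter ((convex_Icc (-α) α).linear_preimage (Φ : Y →ₗ[ℝ] ℝ))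
  convert hconv.linear_image Y.subtype using 1
  ext x
  constructor
  · rintro ⟨y, rfl, hy, hΦy⟩
    exact ⟨y, ⟨by simpa using hy, abs_le.1 hΦy⟩, rfl⟩
  · rintro ⟨y, ⟨hy, hΦy⟩, rfl⟩
    exact ⟨y, rfl, by simpa using hy, abs_le.2 hΦy⟩

lemma exists_eq_add_sub_of_mem_convexHull_union_neg {U V : Set E} (hU : Convex ℝ U)
    (hV : Convex ℝ V) (hU₀ : U.Nonempty) (hV₀ : V.Nonempty) {z : E}
    (hz : z ∈ convexHull ℝ (U ∪ V ∪ -V)) :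
    ∃ y ∈ U, ∃ v₁ ∈ V, ∃ v₂ ∈ V, ∃ ν a q : ℝ, 0 ≤ ν ∧ 0 ≤ a ∧ 0 ≤ q ∧ ν + a + q = 1 ∧
      z = ν • y + a • v₁ - q • v₂ := by
  rw [convexHull_union (hU₀.mono subset_union_left) hV₀.neg, hU.convexHull_union hV hU₀ hV₀,
    hV.neg.convexHull_eq, mem_convexJoin] at hz
  obtain ⟨w, hw, v₂', hv₂, p, q, hp, hq, hpq, rfl⟩ := hz
  obtain ⟨y, hy, v₁, hv₁, b, c, hb, hc, hbc, rfl⟩ := mem_convexJoin.1 hw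
  refine ⟨y, hy, v₁, hv₁, -v₂', hv₂, p * b, p * c, q, by positivity, by positivity, hq, ?_, ?_⟩
  · linear_combination p * hbc + hpq
  · module

lemma gauge_smul_add_sub_add_le {s : Set E} (hs : Convex ℝ s) (hs₀ : Absorbent ℝ s)
    {y v₁ v₂ : E} (hy : y ∈ s) (hv₁ : v₁ ∈ s) (hv₂ : v₂ ∈ s) (hnv₂ : -v₂ ∈ s) {ν a q η : ℝ}
    (hν : 0 ≤ ν) (ha : 0 ≤ a) (hsum : ν + a + q = 1) (hη : 0 ≤ η) :
    gauge s (η • (ν • y + a • v₁ - q • v₂) + v₂) ≤ η - 1 + 2 * |η * (a - q) + 1| := by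
  have hsplit : η • (ν • y + a • v₁ - q • v₂) + v₂ =
      (η * ν) • y + (η * a) • v₁ + (1 - η * q) • v₂ := by
    module
  have h₁ := gauge_smul_le_of_mem hy (mul_nonneg hη hν)
  have h₂ := gauge_smul_le_of_mem hv₁ (mul_nonneg hη ha)
  have h₃ := gauge_smul_le_abs hv₂ hnv₂ (1 - η * q)
  have h₁₂ := gauge_add_le hs hs₀ ((η * ν) • y) ((η * a) • v₁)
  have h₁₂₃ := gauge_add_le hs hs₀ ((η * ν) • y + (η * a) • v₁) ((1 - η * q) • v₂)
  have hηa : 0 ≤ η * a := mul_nonneg hη ha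
  have hηsum : η * ν + η * a = η - η * q := by linear_combination η * hsum
  rw [hsplit]
  rcases le_total 0 (1 - η * q) with hq | hq
  · rw [abs_of_nonneg hq] at h₃
    rw [abs_of_nonneg (by linarith)]
    linarith
  · rw [abs_of_nonpos hq] at h₃
    linarith [abs_nonneg (η * (a - q) + 1)]

lemma exists_mem_gauge_smul_add_le_of_mem_convexHull {s U V : Set E} (hs : Convex ℝ s)
    (hs₀ : Absorbent ℝ s) (hU : Convex ℝ U) (hV : Convex ℝ V) (hU₀ : U.Nonempty) (hV₀ : V.Nonempty)
    (hsub : U ∪ V ∪ -V ⊆ s) (ℓ : E →ₗ[ℝ] ℝ) (hℓU : ∀ u ∈ U, ℓ u = 0) (hℓV : ∀ v ∈ V, ℓ v = 1)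
    {η : ℝ} (hη : 0 ≤ η) {z : E} (hz : z ∈ convexHull ℝ (U ∪ V ∪ -V)) :
    ∃ v ∈ V, gauge s (η • z + v) ≤ η - 1 + 2 * |ℓ (η • z) + 1| := by
  obtain ⟨y, hy, v₁, hv₁, v₂, hv₂, ν, a, q, hν, ha, -, hsum, rfl⟩ :=
    exists_eq_add_sub_of_mem_convexHull_union_neg hU hV hU₀ hV₀ hz
  have hℓz : ℓ (η • (ν • y + a • v₁ - q • v₂)) = η * (a - q) := by
    simp [hℓU y hy, hℓV v₁ hv₁, hℓV v₂ hv₂]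
  refine ⟨v₂, hv₂, hℓz ▸ gauge_smul_add_sub_add_le hs hs₀ (hsub (.inl (.inl hy)))
    (hsub (.inl (.inr hv₁))) (hsub (.inl (.inr hv₂))) (hsub (.inr (neg_mem_neg.2 hv₂))) hν ha hsum
    hη⟩

lemma mem_nhds_zero_of_ker_ball_subset {K : Set E} (hK : Convex ℝ K) (ℓ : StrongDual ℝ E)
    {x₀ : E} (hx₀ : ℓ x₀ = 1) (hx₀K : x₀ ∈ K) (hnx₀K : -x₀ ∈ K) {ρ : ℝ} (hρ : 0 < ρ)
    (hker : ∀ w, ℓ w = 0 → ‖w‖ < ρ → w ∈ K) : K ∈ 𝓝 0 := by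
  have hseg : ∀ c : ℝ, |c| ≤ 1 → c • x₀ ∈ K := fun c hc => by
    convert hK hx₀K hnx₀K (a := (1 + c) / 2) (b := (1 - c) / 2) (by linarith [abs_le.1 hc])
      (by linarith [abs_le.1 hc]) (by ring) using 1
    module
  have hW : {x | |ℓ x| < 1 / 2} ∩ {x | ‖x - ℓ x • x₀‖ < ρ / 2} ∈ 𝓝 (0 : E) :=
    Filter.inter_mem (IsOpen.mem_nhds (isOpen_lt (by fun_prop) continuous_const) (by simp))
      (IsOpen.mem_nhds (isOpen_lt (by fun_prop) continuous_const) (by simp [hρ]))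
  refine Filter.mem_of_superset hW ?_
  rintro x ⟨hℓx : |ℓ x| < 1 / 2, hx : ‖x - ℓ x • x₀‖ < ρ / 2⟩
  have hw : (2 : ℝ) • (x - ℓ x • x₀) ∈ K :=
    hker _ (by simp [hx₀]) (by rw [norm_smul, Real.norm_two]; linarith)
  have hc : (2 * ℓ x) • x₀ ∈ K := hseg _ (by rw [abs_mul, abs_two]; linarith)
  convert hK hw hc (a := 1 / 2) (b := 1 / 2) (by norm_num) (by norm_num) (by norm_num) using 1
  module

lemma iInf_gauge_sub_le_of_mem_closure_convexHull {s U T : Set E} (hs : Convex ℝ s)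
    (hs₀ : s ∈ 𝓝 0) (hU : Convex ℝ U) (hT : Convex ℝ T) (hU₀ : U.Nonempty) (hT₀ : T.Nonempty)
    (hT_neg : ∀ b ∈ T, -b ∈ T) {x₀ : E}
    (hsub : U ∪ (x₀ + ·) '' T ∪ -((x₀ + ·) '' T) ⊆ s) (ℓ : StrongDual ℝ E)
    (hℓU : ∀ u ∈ U, ℓ u = 0) (hℓT : ∀ b ∈ T, ℓ b = 0) (hx₀ : ℓ x₀ = 1) {η : ℝ} (hη : 0 ≤ η)
    {z : E} (hz : z ∈ closure (convexHull ℝ (U ∪ (x₀ + ·) '' T ∪ -((x₀ + ·) '' T)))) :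
    ⨅ u : T, gauge s (η • z + x₀ - u) ≤ η - 1 + 2 * |ℓ (η • z) + 1| := by
  have : Nonempty T := hT₀.to_subtype
  have hclosed :
      IsClosed {z | ⨅ u : T, gauge s (η • z + x₀ - u) ≤ η - 1 + 2 * |ℓ (η • z) + 1|} :=
    isClosed_le ((continuous_iInf_gauge_sub hs hs₀ T).comp (by fun_prop)) (by fun_prop)
  refine closure_minimal (fun z hz => ?_) hclosed hz
  have hV : Convex ℝ ((x₀ + ·) '' T) := hT.translate x₀
  have hℓV : ∀ v ∈ (x₀ + ·) '' T, (ℓ : E →ₗ[ℝ] ℝ) v = 1 := by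
    rintro _ ⟨b, hb, rfl⟩; simp [hx₀, hℓT b hb]
  obtain ⟨v, hv, hle⟩ := exists_mem_gauge_smul_add_le_of_mem_convexHull hs
    (absorbent_nhds_zero hs₀) hU hV hU₀ (hT₀.image _) hsub (ℓ : E →ₗ[ℝ] ℝ) hℓU hℓV hη hz
  obtain ⟨b, hb, rfl⟩ := hv
  have hbdd : BddBelow (range fun u : T => gauge s (η • z + x₀ - u)) :=
    ⟨0, forall_mem_range.2 fun _ => gauge_nonneg _⟩
  calc ⨅ u : T, gauge s (η • z + x₀ - u) ≤ gauge s (η • z + x₀ - -b) :=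
        ciInf_le hbdd ⟨-b, hT_neg b hb⟩
    _ = gauge s (η • z + (x₀ + b)) := by rw [sub_neg_eq_add, add_assoc]
    _ ≤ η - 1 + 2 * |ℓ (η • z) + 1| := by simpa only [ContinuousLinearMap.coe_coe] using hle

end Garkavi

theorem stmt_19_general {X : Type*} [NormedAddCommGroup X] [NormedSpace ℝ X]
    (xstar : StrongDual ℝ X)
    (Y : Submodule ℝ X) (hYdef : Y = LinearMap.ker (xstar : X →ₗ[ℝ] ℝ))
    (Φ : StrongDual ℝ Y) (hΦ : ‖Φ‖ = 1)
    (γ : ℝ) (hγ : 0 < γ)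
    (x₀ : X) (hx₀ : xstar x₀ = 1)
    (α : ℝ) (hα₁ : 3 / 4 ≤ α) (hα₂ : α < 1)
    (Bγ : Set X) (hBγ : Bγ = (Y : Set X) ∩ closedBall 0 γ)
    (U : Set X) (hU : U = {x : X | ∃ y : Y, (y : X) = x ∧ ‖x‖ ≤ 1 ∧ |Φ y| ≤ α})
    (V : Set X) (hV : V = (fun z => x₀ + z) '' Bγ)
    (B : Set X) (hB : B = closure (convexHull ℝ (U ∪ V ∪ (-V))))
    (η : ℝ) (hη : 1 < η) (y : X) (hy : y ∈ Y) (hmem : η⁻¹ • (y - x₀) ∈ B) :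
    ⨅ u : Bγ, gauge B (y - (u : X)) ≤ η - 1 := by
  subst hV
  have hℓY : ∀ v ∈ Y, xstar v = 0 := fun v hv => by rw [hYdef] at hv; exact hv
  have hℓU : ∀ u ∈ U, xstar u = 0 := by rw [hU]; rintro _ ⟨w, rfl, -⟩; exact hℓY w w.2
  have hℓBγ : ∀ b ∈ Bγ, xstar b = 0 := fun b hb => hℓY b (hBγ ▸ hb).1
  have hBγ_neg : ∀ b ∈ Bγ, -b ∈ Bγ := by
    rw [hBγ]; rintro b ⟨hbY, hb⟩; exact ⟨Y.neg_mem hbY, by simpa using hb⟩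
  have hBγ₀ : (0 : X) ∈ Bγ := by rw [hBγ]; exact ⟨Y.zero_mem, mem_closedBall_self hγ.le⟩
  have hU₀ : (0 : X) ∈ U := by rw [hU]; exact ⟨0, rfl, by simp, by simp; linarith⟩
  have hx₀V : x₀ ∈ (x₀ + ·) '' Bγ := ⟨0, hBγ₀, add_zero x₀⟩
  have hsub : U ∪ (x₀ + ·) '' Bγ ∪ -((x₀ + ·) '' Bγ) ⊆ B := by
    rw [hB]; exact (subset_convexHull ℝ _).trans subset_closure
  have hBconv : Convex ℝ B := by rw [hB]; exact (convex_convexHull ℝ _).closure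
  have hB₀ : B ∈ 𝓝 0 := by
    refine mem_nhds_zero_of_ker_ball_subset hBconv xstar hx₀ (hsub (.inl (.inr hx₀V)))
      (hsub (.inr (neg_mem_neg.2 hx₀V))) (ρ := α) (by linarith) fun w hw hwα =>
      hsub (.inl (.inl ?_))
    have hwY : w ∈ Y := by rw [hYdef]; exact hw
    have hΦw : |Φ ⟨w, hwY⟩| ≤ ‖w‖ := by simpa [hΦ] using Φ.le_opNorm ⟨w, hwY⟩
    rw [hU]
    exact ⟨⟨w, hwY⟩, rfl, by linarith, by linarith⟩
  rw [hB] at hmem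
  have key := iInf_gauge_sub_le_of_mem_closure_convexHull hBconv hB₀
    (hU ▸ convex_setOf_exists_coe_eq_norm_le_abs_le Y Φ α)
    (hBγ ▸ Y.convex.inter (convex_closedBall 0 γ)) ⟨0, hU₀⟩ ⟨0, hBγ₀⟩ hBγ_neg hsub xstar
    hℓU hℓBγ hx₀ (by linarith : 0 ≤ η) hmem
  rwa [smul_inv_smul₀ (by positivity), sub_add_cancel, map_sub, hℓY y hy, hx₀, zero_sub,
    neg_add_cancel, abs_zero, mul_zero, add_zero] at key

/-- in Garkavi's construction, if `η > 1`, `y ∈ Y` and `(y - x₀)/η ∈ B`,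
then `d_{‖·‖_B}(y, B_γ) ≤ η - 1`, the distance being measured by the Minkowski functional
`gauge B` of `B`. -/
theorem stmt_19 {X : Type*} [NormedAddCommGroup X] [NormedSpace ℝ X] [CompleteSpace X]
    (xstar : StrongDual ℝ X) (hxs : xstar ≠ 0)
    (Y : Submodule ℝ X) (hYdef : Y = LinearMap.ker (xstar : X →ₗ[ℝ] ℝ))
    (Φ : StrongDual ℝ Y) (hΦ : ‖Φ‖ = 1) (hna : ∀ y : Y, ‖y‖ ≤ 1 → |Φ y| < 1)
    (γ : ℝ) (hγ : 0 < γ)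
    (x₀ : X) (hx₀ : xstar x₀ = 1)
    (α : ℝ) (hα₁ : 3 / 4 ≤ α) (hα₂ : α < 1)
    (Bγ : Set X) (hBγ : Bγ = (Y : Set X) ∩ closedBall 0 γ)
    (U : Set X) (hU : U = {x : X | ∃ y : Y, (y : X) = x ∧ ‖x‖ ≤ 1 ∧ |Φ y| ≤ α})
    (V : Set X) (hV : V = (fun z => x₀ + z) '' Bγ)
    (B : Set X) (hB : B = closure (convexHull ℝ (U ∪ V ∪ (-V))))
    (η : ℝ) (hη : 1 < η) (y : X) (hy : y ∈ Y) (hmem : η⁻¹ • (y - x₀) ∈ B) :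
    ⨅ u : Bγ, gauge B (y - (u : X)) ≤ η - 1 :=
  stmt_19_general xstar Y hYdef Φ hΦ γ hγ x₀ hx₀ α hα₁ hα₂ Bγ hBγ U hU V hV B hB η hη y hy hmem
end
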